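/- arXiv:1910.05652 — 6 statements merged into one kernel-verified Lean document; each statement's English description precedes it below -/
import Mathlib

section
/- Let T be an abstract simplicial complex of subsets of U_n := {0,...,n-1} and let Φ ∈ ℝ^{m×n}. Then every vector x̄ ∈ ℝⁿ with supp(x̄) ∈ T is the unique solution of the problem min ‖x‖₁ subject to Φx = Φx̄ if and only if Φ satisfies the Generalized Nullspace Property with respect to T. -/
/-! If `Φ x = Φ x̄` with `x ≠ x̄` and `S = supp x̄`, then `η = x - x̄` is a nonzero kernel vector and
`‖x̄‖₁ = ‖x̄_S‖₁ ≤ ‖x_S‖₁ + ‖η_S‖₁ < ‖x_S‖₁ + ‖η_{Sᶜ}‖₁ = ‖x‖₁`, since `η` and `x` agree off `S`.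
Conversely, a nonzero kernel vector `η` and `S ∈ T` split `η = x - x̄` with `x̄ = -η_S`, supported in
`S` and hence in `T` because `T` is closed under subsets, and `x = η_{Sᶜ}`; minimality of `x̄` then
reads `‖η_S‖₁ < ‖η_{Sᶜ}‖₁`. -/

/-- The ℓ₁ norm of a vector in ℝⁿ. -/
noncomputable def l1 {n : ℕ} (x : Fin n → ℝ) : ℝ := ∑ i, |x i|

/-- The ℓ₁ norm of the restriction of a vector to an index set `S`. -/
noncomputable def l1S {n : ℕ} (S : Finset (Fin n)) (x : Fin n → ℝ) : ℝ := ∑ i ∈ S, |x i|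

/-- The support of a vector, as a finite index set. -/
noncomputable def suppF {n : ℕ} (x : Fin n → ℝ) : Finset (Fin n) :=
  Finset.univ.filter (fun i => x i ≠ 0)

open Finset

section L1

variable {n : ℕ}

lemma l1_eq_l1S_add_l1S_compl (S : Finset (Fin n)) (x : Fin n → ℝ) :
    l1 x = l1S S x + l1S Sᶜ x :=
  (sum_add_sum_compl S fun i => |x i|).symm

lemma l1_neg (x : Fin n → ℝ) : l1 (-x) = l1 x := by
  simp only [l1, Pi.neg_apply, abs_neg]

lemma l1S_sub_le (S : Finset (Fin n)) (x y : Fin n → ℝ) :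
    l1S S (x - y) ≤ l1S S x + l1S S y := by
  rw [l1S, l1S, l1S, ← sum_add_distrib]
  exact sum_le_sum fun i _ => abs_sub (x i) (y i)

lemma l1S_compl_suppF (x : Fin n → ℝ) : l1S (suppF x)ᶜ x = 0 :=
  sum_eq_zero fun i hi => by simp_all [suppF]

lemma suppF_neg (x : Fin n → ℝ) : suppF (-x) = suppF x := by
  simp only [suppF, Pi.neg_apply, neg_ne_zero]

lemma suppF_indicator_subset (S : Finset (Fin n)) (x : Fin n → ℝ) :
    suppF ((S : Set (Fin n)).indicator x) ⊆ S := fun i hi => by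
  by_contra hiS
  simp_all [suppF]

lemma l1_indicator (S : Finset (Fin n)) (x : Fin n → ℝ) :
    l1 ((S : Set (Fin n)).indicator x) = l1S S x := by
  simp only [l1, l1S, Set.indicator_apply, mem_coe, apply_ite abs, abs_zero, sum_ite_mem,
    univ_inter]

end L1

lemma mulVec_eq_mulVec_iff_sub {R m n : Type*} [Ring R] [Fintype n] (A : Matrix m n R)
    (x y : n → R) : A.mulVec x = A.mulVec y ↔ A.mulVec (x - y) = 0 := by
  rw [Matrix.mulVec_sub, sub_eq_zero]

lemma l1_lt_of_nullspace_property {m n : ℕ} (Φ : Matrix (Fin m) (Fin n) ℝ) (xbar x : Fin n → ℝ)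
    (hnsp : ∀ η : Fin n → ℝ, Φ.mulVec η = 0 → η ≠ 0 → l1S (suppF xbar) η < l1S (suppF xbar)ᶜ η)
    (hΦ : Φ.mulVec x = Φ.mulVec xbar) (hne : x ≠ xbar) : l1 xbar < l1 x := by
  set S := suppF xbar
  have hη := hnsp (x - xbar) ((mulVec_eq_mulVec_iff_sub Φ x xbar).mp hΦ) (sub_ne_zero.mpr hne)
  calc l1 xbar = l1S S (x - (x - xbar)) := by
          rw [sub_sub_cancel, l1_eq_l1S_add_l1S_compl S, l1S_compl_suppF, add_zero]
    _ ≤ l1S S x + l1S S (x - xbar) := l1S_sub_le S x _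
    _ < l1S S x + l1S Sᶜ (x - xbar) := by linarith
    _ ≤ l1S S x + (l1S Sᶜ x + l1S Sᶜ xbar) := by linarith [l1S_sub_le Sᶜ x xbar]
    _ = l1 x := by rw [l1S_compl_suppF, add_zero, ← l1_eq_l1S_add_l1S_compl]

lemma nullspace_property_of_l1_lt {m n : ℕ} (Φ : Matrix (Fin m) (Fin n) ℝ) (S : Finset (Fin n))
    (hmin : ∀ xbar : Fin n → ℝ, suppF xbar ⊆ S →
        ∀ x : Fin n → ℝ, Φ.mulVec x = Φ.mulVec xbar → x ≠ xbar → l1 xbar < l1 x)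
    (η : Fin n → ℝ) (hΦ : Φ.mulVec η = 0) (hη : η ≠ 0) : l1S S η < l1S Sᶜ η := by
  set xbar := -(S : Set (Fin n)).indicator η
  set x := ((Sᶜ : Finset (Fin n)) : Set (Fin n)).indicator η with hx
  have hsplit : x - xbar = η := by
    rw [hx, sub_neg_eq_add, coe_compl, add_comm, Set.indicator_self_add_compl]
  have hsupp : suppF xbar ⊆ S := (suppF_neg _).trans_subset (suppF_indicator_subset S η)
  have hlt := hmin xbar hsupp x ((mulVec_eq_mulVec_iff_sub Φ x xbar).mpr (hsplit ▸ hΦ))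
    fun h => hη (by rw [← hsplit, h, sub_self])
  rwa [l1_neg, l1_indicator, l1_indicator] at hlt

theorem stmt0_general {m n : ℕ} (Φ : Matrix (Fin m) (Fin n) ℝ) (T : Set (Finset (Fin n)))
    (hASC : ∀ S ∈ T, ∀ W ⊆ S, W ∈ T) :
    (∀ xbar : Fin n → ℝ, suppF xbar ∈ T →
        ∀ x : Fin n → ℝ, Φ.mulVec x = Φ.mulVec xbar → x ≠ xbar → l1 xbar < l1 x)
      ↔ (∀ η : Fin n → ℝ, Φ.mulVec η = 0 → η ≠ 0 → ∀ S ∈ T, l1S S η < l1S Sᶜ η) := by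
  constructor
  · intro hmin η hΦ hη S hS
    exact nullspace_property_of_l1_lt Φ S
      (fun xbar hsupp => hmin xbar (hASC S hS _ hsupp)) η hΦ hη
  · intro hnsp xbar hsupp x
    exact l1_lt_of_nullspace_property Φ xbar x fun η hΦ hη => hnsp η hΦ hη _ hsupp

/-- Let `T` be an abstract simplicial complex of subsets of `U_n = {0,…,n-1}` and
`Φ ∈ ℝ^{m×n}`.  Every `xbar` with `supp xbar ∈ T` is the unique solution of
`min ‖x‖₁ s.t. Φ x = Φ xbar` iff `Φ` satisfies the Generalized Nullspace Property w.r.t. `T`. -/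
theorem stmt0 {m n : ℕ} (Φ : Matrix (Fin m) (Fin n) ℝ) (T : Set (Finset (Fin n)))
    (hTne : T.Nonempty) (hASC : ∀ S ∈ T, ∀ W ⊆ S, W ∈ T) :
    (∀ xbar : Fin n → ℝ, suppF xbar ∈ T →
        ∀ x : Fin n → ℝ, Φ.mulVec x = Φ.mulVec xbar → x ≠ xbar → l1 xbar < l1 x)
      ↔ (∀ η : Fin n → ℝ, Φ.mulVec η = 0 → η ≠ 0 → ∀ S ∈ T, l1S S η < l1S Sᶜ η) :=
  stmt0_general Φ T hASC
end

section
/- Let T be any collection of subsets of U_n := {0,...,n-1} (not necessarily an abstract simplicial complex) and let Φ ∈ ℝ^{m×n}. Then every vector x̄ ∈ ℝⁿ with supp(x̄) ∈ T is the unique solution of min ‖x‖₁ subject to Φx = Φx̄ if and only if T ⊆ T_max(Φ), where T_max(Φ) = {S ⊆ U_n : ‖η_S‖₁ < ‖η_{S^c}‖₁ for every nonzero η in the nullspace of Φ}. -/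
/-- The maximum abstract simplicial complex associated with `Φ`:
all index sets `S` with `‖η_S‖₁ < ‖η_{Sᶜ}‖₁` for every nonzero `η ∈ null(Φ)`. -/
def Tmax {m n : ℕ} (Φ : Matrix (Fin m) (Fin n) ℝ) : Set (Finset (Fin n)) :=
  {S | ∀ η : Fin n → ℝ, Φ.mulVec η = 0 → η ≠ 0 → l1S S η < l1S Sᶜ η}

/-! If `x̄` vanishes off `S` and `η = x - x̄`, the triangle inequality on `S` gives
`‖x‖₁ ≥ ‖x̄‖₁ - ‖η_S‖₁ + ‖η_{Sᶜ}‖₁`, so `S ∈ T_max(Φ)` forces `‖x̄‖₁ < ‖x‖₁` for every other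
feasible `x`. Conversely, for `η ∈ null(Φ)` the vector `x̄` equal to `-η` on `S` (and to `1` where
`η` vanishes on `S`, so that its support is exactly `S`) attains equality there, so unique
minimality of `x̄` forces `‖η_S‖₁ < ‖η_{Sᶜ}‖₁`. -/

open Finset

variable {n : ℕ}

lemma l1S_compl_eq_zero_of_eq_zero {S : Finset (Fin n)} {v : Fin n → ℝ}
    (hv : ∀ i ∉ S, v i = 0) : l1S Sᶜ v = 0 :=
  sum_eq_zero fun i hi => by simp [hv i (mem_compl.mp hi)]

lemma l1S_compl_add_of_eq_zero {S : Finset (Fin n)} {v : Fin n → ℝ}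
    (hv : ∀ i ∉ S, v i = 0) (η : Fin n → ℝ) : l1S Sᶜ (v + η) = l1S Sᶜ η :=
  sum_congr rfl fun i hi => by simp [hv i (mem_compl.mp hi)]

lemma l1_add_le_add_of_eq_zero {S : Finset (Fin n)} {v : Fin n → ℝ}
    (hv : ∀ i ∉ S, v i = 0) (η : Fin n → ℝ) :
    l1 v + l1S Sᶜ η ≤ l1 (v + η) + l1S S η := by
  have triangle : l1S S v ≤ l1S S (v + η) + l1S S η := by
    rw [l1S, l1S, l1S, ← sum_add_distrib]
    exact sum_le_sum fun i _ => by simpa using abs_sub (v i + η i) (η i)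
  rw [l1_eq_l1S_add_l1S_compl S v, l1_eq_l1S_add_l1S_compl S (v + η),
    l1S_compl_eq_zero_of_eq_zero hv, l1S_compl_add_of_eq_zero hv]
  linarith

lemma l1_lt_of_suppF_mem_Tmax {m : ℕ} {Φ : Matrix (Fin m) (Fin n) ℝ} {xbar x : Fin n → ℝ}
    (hS : suppF xbar ∈ Tmax Φ) (hΦ : Φ.mulVec x = Φ.mulVec xbar) (hne : x ≠ xbar) :
    l1 xbar < l1 x := by
  have hη : Φ.mulVec (x - xbar) = 0 := by rw [Matrix.mulVec_sub, hΦ, sub_self]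
  have hlt := hS (x - xbar) hη (sub_ne_zero.mpr hne)
  have hle := l1_add_le_add_of_eq_zero (S := suppF xbar) (v := xbar)
    (fun i hi => by simpa [suppF] using hi) (x - xbar)
  rw [add_sub_cancel] at hle
  linarith

noncomputable def cancelOn (S : Finset (Fin n)) (η : Fin n → ℝ) : Fin n → ℝ :=
  fun i => if i ∈ S then (if η i = 0 then 1 else -η i) else 0

lemma suppF_cancelOn (S : Finset (Fin n)) (η : Fin n → ℝ) : suppF (cancelOn S η) = S := by
  ext i
  by_cases hi : i ∈ S <;> by_cases h0 : η i = 0 <;> simp [suppF, cancelOn, hi, h0]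

lemma l1_cancelOn_add (S : Finset (Fin n)) (η : Fin n → ℝ) :
    l1 (cancelOn S η + η) + l1S S η = l1 (cancelOn S η) + l1S Sᶜ η := by
  have hv : ∀ i ∉ S, cancelOn S η i = 0 := fun i hi => by simp [cancelOn, hi]
  have onS : l1S S (cancelOn S η) = l1S S (cancelOn S η + η) + l1S S η := by
    rw [l1S, l1S, l1S, ← sum_add_distrib]
    refine sum_congr rfl fun i hi => ?_
    by_cases h0 : η i = 0 <;> simp [cancelOn, hi, h0]
  rw [l1_eq_l1S_add_l1S_compl S (cancelOn S η), l1_eq_l1S_add_l1S_compl S (cancelOn S η + η),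
    l1S_compl_eq_zero_of_eq_zero hv, l1S_compl_add_of_eq_zero hv, onS]
  ring

/-- Let `T` be any collection of subsets of `U_n` and `Φ ∈ ℝ^{m×n}`.  Every `xbar` with
`supp xbar ∈ T` is the unique solution of `min ‖x‖₁ s.t. Φ x = Φ xbar` iff `T ⊆ T_max(Φ)`. -/
theorem stmt2 {m n : ℕ} (Φ : Matrix (Fin m) (Fin n) ℝ) (T : Set (Finset (Fin n))) :
    (∀ xbar : Fin n → ℝ, suppF xbar ∈ T →
        ∀ x : Fin n → ℝ, Φ.mulVec x = Φ.mulVec xbar → x ≠ xbar → l1 xbar < l1 x)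
      ↔ T ⊆ Tmax Φ := by
  refine ⟨fun h S hS η hη hne => ?_, fun hT xbar hx x => l1_lt_of_suppF_mem_Tmax (hT hx)⟩
  have hlt := h (cancelOn S η) (by rwa [suppF_cancelOn]) (cancelOn S η + η)
    (by rw [Matrix.mulVec_add, hη, add_zero]) (by simpa using hne)
  linarith [l1_cancelOn_add S η]
end

section
/- Let T be a collection of subsets of U_n := {0,...,n-1}. A matrix Φ ∈ ℝ^{m×n} satisfies the Generalized Nullspace Property with respect to T if and only if max over S ∈ T of the max over z ∈ Ext(null(Φ) ∩ B₁ⁿ) of ‖z_S‖₁ is strictly less than 1/2, where Ext(C) denotes the set of extreme points of a convex set C. -/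
open Set

theorem Real.sSup_lt_of_subset_isCompact {R A : Set ℝ} (hA : IsCompact A) (hRA : R ⊆ A)
    {a : ℝ} (ha : 0 < a) (hlt : ∀ r ∈ A, r < a) : sSup R < a := by
  rcases R.eq_empty_or_nonempty with rfl | hR
  · simpa using ha
  · exact (csSup_le_csSup hA.bddAbove hR hRA).trans_lt (hlt _ (hA.sSup_mem (hR.mono hRA)))

section ExtremePoints

variable {E : Type*} [AddCommGroup E] [Module ℝ E] [TopologicalSpace E] [T2Space E]
  [IsTopologicalAddGroup E] [ContinuousSMul ℝ E] [LocallyConvexSpace ℝ E]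

theorem ConvexOn.le_of_forall_mem_extremePoints_le {K : Set E} (hK : IsCompact K)
    (hKconv : Convex ℝ K) {f : E → ℝ} (hf : ConvexOn ℝ univ f) (hfc : LowerSemicontinuous f)
    {c : ℝ} (h : ∀ z ∈ K.extremePoints ℝ, f z ≤ c) {x : E} (hx : x ∈ K) : f x ≤ c := by
  have hsub : convexHull ℝ (K.extremePoints ℝ) ⊆ {y | f y ≤ c} := by
    refine convexHull_min h ?_
    simpa only [sep_univ] using hf.convex_le c
  rw [← closure_convexHull_extremePoints hK hKconv] at hx
  exact closure_minimal hsub (hfc.isClosed_preimage c) hx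

theorem sSup_extremePoints_lt_iff {ι : Type*} {T : Set ι} (hT : T.Finite) {K : Set E}
    (hK : IsCompact K) (hKconv : Convex ℝ K) {f : ι → E → ℝ} (hf : ∀ i, ConvexOn ℝ univ (f i))
    (hfc : ∀ i, Continuous (f i)) {a : ℝ} (ha : 0 < a) :
    sSup {r | ∃ i ∈ T, ∃ z ∈ K.extremePoints ℝ, r = f i z} < a ↔
      ∀ i ∈ T, ∀ x ∈ K, f i x < a := by
  set A := ⋃ i ∈ T, f i '' K
  have hA : IsCompact A := hT.isCompact_biUnion fun i _ => hK.image (hfc i)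
  have hRA : {r | ∃ i ∈ T, ∃ z ∈ K.extremePoints ℝ, r = f i z} ⊆ A := by
    rintro _ ⟨i, hi, z, hz, rfl⟩
    exact mem_biUnion hi (mem_image_of_mem _ (extremePoints_subset hz))
  constructor
  · intro hlt i hi x hx
    refine lt_of_le_of_lt ?_ hlt
    refine (hf i).le_of_forall_mem_extremePoints_le hK hKconv (hfc i).lowerSemicontinuous
      (fun z hz => ?_) hx
    exact le_csSup (hA.bddAbove.mono hRA) ⟨i, hi, z, hz, rfl⟩
  · intro hlt
    refine Real.sSup_lt_of_subset_isCompact hA hRA ha ?_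
    simp only [A, mem_iUnion, mem_image]
    rintro _ ⟨i, hi, x, hx, rfl⟩
    exact hlt i hi x hx

end ExtremePoints

section L1

variable {n : ℕ}

theorem l1S_univ (x : Fin n → ℝ) : l1S Finset.univ x = l1 x := rfl

theorem l1_nonneg (x : Fin n → ℝ) : 0 ≤ l1 x :=
  Finset.sum_nonneg fun i _ => abs_nonneg (x i)

theorem l1S_add_l1S_compl (S : Finset (Fin n)) (x : Fin n → ℝ) :
    l1S S x + l1S Sᶜ x = l1 x :=
  Finset.sum_add_sum_compl S _

theorem l1S_smul (S : Finset (Fin n)) (c : ℝ) (x : Fin n → ℝ) :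
    l1S S (c • x) = |c| * l1S S x := by
  simp [l1S, Finset.mul_sum, abs_mul]

theorem l1_smul (c : ℝ) (x : Fin n → ℝ) : l1 (c • x) = |c| * l1 x :=
  l1S_smul Finset.univ c x

theorem abs_le_l1 (x : Fin n → ℝ) (i : Fin n) : |x i| ≤ l1 x :=
  Finset.single_le_sum (fun j _ => abs_nonneg (x j)) (Finset.mem_univ i)

theorem l1_pos {x : Fin n → ℝ} (hx : x ≠ 0) : 0 < l1 x := by
  obtain ⟨i, hi⟩ := Function.ne_iff.1 hx
  exact (abs_pos.2 hi).trans_le (abs_le_l1 x i)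

theorem continuous_l1S (S : Finset (Fin n)) : Continuous (l1S S) :=
  continuous_finsetSum _ fun i _ => (continuous_apply i).abs

theorem convexOn_l1S (S : Finset (Fin n)) : ConvexOn ℝ univ (l1S S) := by
  refine ⟨convex_univ, fun x _ y _ a b ha hb _ => ?_⟩
  simp only [l1S, smul_eq_mul, Pi.add_apply, Pi.smul_apply, Finset.mul_sum,
    ← Finset.sum_add_distrib]
  refine Finset.sum_le_sum fun i _ => ?_
  calc |a * x i + b * y i| ≤ |a * x i| + |b * y i| := abs_add_le _ _
    _ = a * |x i| + b * |y i| := by rw [abs_mul, abs_mul, abs_of_nonneg ha, abs_of_nonneg hb]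

theorem convex_setOf_l1_le (r : ℝ) : Convex ℝ {x : Fin n → ℝ | l1 x ≤ r} := by
  simpa only [sep_univ, l1S_univ] using (convexOn_l1S Finset.univ).convex_le r

theorem isCompact_setOf_l1_le (r : ℝ) : IsCompact {x : Fin n → ℝ | l1 x ≤ r} := by
  refine Metric.isCompact_of_isClosed_isBounded
    (isClosed_le (continuous_l1S Finset.univ) continuous_const)
    ((Metric.isBounded_closedBall (x := 0) (r := r)).subset fun x hx => ?_)
  rw [mem_closedBall_zero_iff, pi_norm_le_iff_of_nonneg ((l1_nonneg x).trans hx)]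
  exact fun i => (Real.norm_eq_abs _).trans_le ((abs_le_l1 x i).trans hx)

theorem forall_l1S_lt_l1S_compl_iff (V : Submodule ℝ (Fin n → ℝ)) (S : Finset (Fin n)) :
    (∀ η ∈ V, η ≠ 0 → l1S S η < l1S Sᶜ η) ↔
      ∀ z ∈ (V : Set (Fin n → ℝ)) ∩ {x | l1 x ≤ 1}, l1S S z < 1 / 2 := by
  constructor
  · rintro h z ⟨hzV, hz : l1 z ≤ 1⟩
    rcases eq_or_ne z 0 with rfl | hz0
    · simp [l1S]
    · linarith [h z hzV hz0, l1S_add_l1S_compl S z]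
  · intro h η hηV hη0
    have hpos := l1_pos hη0
    have hz := h ((l1 η)⁻¹ • η) ⟨V.smul_mem _ hηV, ?_⟩
    · rw [l1S_smul, abs_of_pos (inv_pos.2 hpos), inv_mul_lt_iff₀ hpos] at hz
      linarith [l1S_add_l1S_compl S η]
    · change l1 _ ≤ 1
      rw [l1_smul, abs_of_pos (inv_pos.2 hpos), inv_mul_cancel₀ hpos.ne']

end L1

/-- A matrix `Φ ∈ ℝ^{m×n}` satisfies the Generalized Nullspace Property w.r.t. a collection
`T` of subsets of `U_n` iff the max over `S ∈ T` and over extreme points `z` of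
`null(Φ) ∩ B₁ⁿ` of `‖z_S‖₁` is strictly less than `1/2`. -/
theorem stmt3 {m n : ℕ} (Φ : Matrix (Fin m) (Fin n) ℝ) (T : Set (Finset (Fin n))) :
    (∀ η : Fin n → ℝ, Φ.mulVec η = 0 → η ≠ 0 → ∀ S ∈ T, l1S S η < l1S Sᶜ η)
      ↔ sSup {r : ℝ | ∃ S ∈ T,
          ∃ z ∈ Set.extremePoints ℝ ({η : Fin n → ℝ | Φ.mulVec η = 0} ∩ {x | l1 x ≤ 1}),
            r = l1S S z} < 1 / 2 := by
  set V := LinearMap.ker Φ.mulVecLin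
  have hV : {η : Fin n → ℝ | Φ.mulVec η = 0} = V := rfl
  have hK : IsCompact ((V : Set (Fin n → ℝ)) ∩ {x | l1 x ≤ 1}) :=
    (isCompact_setOf_l1_le 1).inter_left V.closed_of_finiteDimensional
  rw [hV, sSup_extremePoints_lt_iff T.toFinite hK (V.convex.inter (convex_setOf_l1_le 1))
    convexOn_l1S continuous_l1S one_half_pos]
  refine Iff.trans ?_ (forall₂_congr fun S _ => forall_l1S_lt_l1S_compl_iff V S)
  exact ⟨fun h S hS η hη hη0 => h η hη hη0 S hS, fun h η hη hη0 S hS => h S hS η hη hη0⟩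
end

section
/- Let V ⊆ ℝⁿ be a subspace of dimension d ≥ 1 and let r := n − d be its codimension. If z is an extreme point of V ∩ B₁ⁿ, then z has at most r + 1 nonzero entries. -/
lemma abs_add_sign (a b : ℝ) (h : |b| ≤ |a|) :
    |a + b| = |a| + (if a < 0 then (-1 : ℝ) else 1) * b := by
  rcases lt_trichotomy a 0 with h1 | h1 | h1
  · rw [if_pos h1, abs_of_neg h1] at *
    rw [abs_of_nonpos (by cases abs_le.mp h; linarith)]
    ring
  · subst h1
    have : b = 0 := by simpa using h
    simp [this]
  · rw [if_neg (by linarith), abs_of_pos h1] at *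
    rw [abs_of_nonneg (by cases abs_le.mp h; linarith)]
    ring

/-- Let `V ⊆ ℝⁿ` be a subspace of dimension `d ≥ 1` and `r = n - d` its codimension.
If `z` is an extreme point of `V ∩ B₁ⁿ`, then `z` has at most `r + 1` nonzero entries. -/
theorem stmt6 {n : ℕ} (V : Submodule ℝ (Fin n → ℝ)) (hd : 1 ≤ Module.finrank ℝ V)
    (z : Fin n → ℝ)
    (hz : z ∈ Set.extremePoints ℝ ((V : Set (Fin n → ℝ)) ∩ {x | l1 x ≤ 1})) :
    (suppF z).card ≤ (n - Module.finrank ℝ V) + 1 := by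
  by_contra hcon
  push_neg at hcon
  set d := Module.finrank ℝ V with hdef
  set S := suppF z with hS
  have hmemS : ∀ i, i ∈ S ↔ z i ≠ 0 := by
    intro i; simp [hS, suppF]
  have hsn : S.card ≤ n := by
    simpa using Finset.card_le_card (Finset.subset_univ S)
  have hdn : d ≤ n := by
    have := Submodule.finrank_le V
    simpa using this
  have hs2 : n - d + 2 ≤ S.card := by omega
  -- the sign vector
  set σ : Fin n → ℝ := fun i => if z i < 0 then (-1 : ℝ) else 1 with hσ
  -- the linear functional w ↦ ∑ σ i * w i
  let F : (Fin n → ℝ) →ₗ[ℝ] ℝ :=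
    { toFun := fun w => ∑ i, σ i * w i
      map_add' := by
        intro a b
        simp [mul_add, Finset.sum_add_distrib]
      map_smul' := by
        intro c a
        simp [Finset.mul_sum]
        ring_nf
        simp [mul_comm, mul_left_comm] }
  let π : (Fin n → ℝ) →ₗ[ℝ] ({i // i ∈ Sᶜ} → ℝ) := LinearMap.funLeft ℝ ℝ Subtype.val
  let Φ : V →ₗ[ℝ] (({i // i ∈ Sᶜ} → ℝ) × ℝ) := (π.prod F).comp V.subtype
  have hrank : Module.finrank ℝ (LinearMap.range Φ) + Module.finrank ℝ (LinearMap.ker Φ) = d :=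
    LinearMap.finrank_range_add_finrank_ker Φ
  have hcod : Module.finrank ℝ (({i // i ∈ Sᶜ} → ℝ) × ℝ) = (n - S.card) + 1 := by
    rw [Module.finrank_prod, Module.finrank_fintype_fun_eq_card, Module.finrank_self]
    simp [Finset.card_compl]
  have hrange : Module.finrank ℝ (LinearMap.range Φ) ≤ (n - S.card) + 1 := by
    have := Submodule.finrank_le (LinearMap.range Φ)
    omega
  have hker : 0 < Module.finrank ℝ (LinearMap.ker Φ) := by omega
  replace hker : Nontrivial (LinearMap.ker Φ) := Module.finrank_pos_iff.mp hker
  obtain ⟨w0, hw0ne⟩ := exists_ne (0 : LinearMap.ker Φ)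
  set w : Fin n → ℝ := ((w0 : V) : Fin n → ℝ) with hw
  have hwV : w ∈ V := (w0 : V).2
  have hwne : w ≠ 0 := by
    intro h
    apply hw0ne
    ext i
    simpa [hw] using congrFun h i
  have hΦ0 : Φ (w0 : V) = 0 := w0.2
  have hπ0 : ∀ i, i ∉ S → w i = 0 := by
    intro i hi
    exact congrFun (congrArg Prod.fst hΦ0) ⟨i, Finset.mem_compl.mpr hi⟩
  have hF0 : ∑ i, σ i * w i = 0 := congrArg Prod.snd hΦ0
  -- choose ε
  have hSne : S.Nonempty := Finset.card_pos.mp (by omega)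
  obtain ⟨i0, hi0S, hi0min⟩ := Finset.exists_min_image S (fun i => |z i|) hSne
  have hm : 0 < |z i0| := abs_pos.mpr ((hmemS i0).mp hi0S)
  set M : ℝ := ∑ i, |w i| with hM
  have hM0 : 0 ≤ M := Finset.sum_nonneg fun i _ => abs_nonneg _
  have hwM : ∀ i, |w i| ≤ M := fun i =>
    Finset.single_le_sum (fun j _ => abs_nonneg (w j)) (Finset.mem_univ i)
  set ε : ℝ := |z i0| / (M + 1) with hε
  have hεpos : 0 < ε := div_pos hm (by linarith)
  have hbound : ∀ c : ℝ, |c| = ε → ∀ i, |c * w i| ≤ |z i| := by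
    intro c hc i
    by_cases hi : i ∈ S
    · rw [abs_mul, hc]
      calc ε * |w i| ≤ ε * (M + 1) := by
            apply mul_le_mul_of_nonneg_left _ hεpos.le
            linarith [hwM i]
        _ = |z i0| := by rw [hε, div_mul_cancel₀ _ (ne_of_gt (by linarith))]
        _ ≤ |z i| := hi0min i hi
    · simp [hπ0 i hi, abs_nonneg]
  -- key l1 computation
  have key : ∀ c : ℝ, |c| = ε → l1 (z + c • w) = l1 z := by
    intro c hc
    have : ∀ i, |z i + c * w i| = |z i| + σ i * (c * w i) := by
      intro i
      by_cases hi : i ∈ S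
      · exact abs_add_sign (z i) (c * w i) (hbound c hc i)
      · have hz0 : z i = 0 := by
          by_contra h; exact hi ((hmemS i).mpr h)
        simp [hz0, hπ0 i hi]
    calc l1 (z + c • w) = ∑ i, |z i + c * w i| := by
          simp [l1, Pi.add_apply, Pi.smul_apply, smul_eq_mul]
      _ = ∑ i, (|z i| + c * (σ i * w i)) := by
          refine Finset.sum_congr rfl fun i _ => ?_
          rw [this i]; ring
      _ = l1 z + c * ∑ i, σ i * w i := by
          rw [Finset.sum_add_distrib, ← Finset.mul_sum, l1]
      _ = l1 z := by rw [hF0]; ring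
  -- construct the two points
  have hzV : z ∈ (V : Set (Fin n → ℝ)) ∩ {x | l1 x ≤ 1} := hz.1
  have hl1z : l1 z ≤ 1 := hzV.2
  have hmem : ∀ c : ℝ, |c| = ε → z + c • w ∈ (V : Set (Fin n → ℝ)) ∩ {x | l1 x ≤ 1} := by
    intro c hc
    refine ⟨V.add_mem hzV.1 (V.smul_mem c hwV), ?_⟩
    simp only [Set.mem_setOf_eq]
    rw [key c hc]
    exact hl1z
  have h1 : z + ε • w ∈ (V : Set (Fin n → ℝ)) ∩ {x | l1 x ≤ 1} :=
    hmem ε (abs_of_pos hεpos)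
  have h2 : z + (-ε) • w ∈ (V : Set (Fin n → ℝ)) ∩ {x | l1 x ≤ 1} :=
    hmem (-ε) (by rw [abs_neg]; exact abs_of_pos hεpos)
  have hseg : z ∈ openSegment ℝ (z + (-ε) • w) (z + ε • w) := by
    refine ⟨1/2, 1/2, by norm_num, by norm_num, by norm_num, ?_⟩
    module
  have := hz.2 h1 h2 (by rw [openSegment_symm]; exact hseg)
  have hεw : ε • w = 0 := by
    have := congrArg (fun x => x - z) this
    simpa [add_sub_cancel_left] using this
  rcases smul_eq_zero.mp hεw with h | h
  · exact hεpos.ne' h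
  · exact hwne h
end

section
/- Let G be a simple directed graph with m vertices and n edges, with incidence matrix A ∈ ℝ^{m×n}, and suppose the nullspace of A is nontrivial. Then the set of extreme points of null(A) ∩ B₁ⁿ equals W₁(G), the set of ℓ₁-normalized signed characteristic vectors of the simple cycles of G. -/
/-- A directed graph on `m` vertices with `n` edges given by `E : Fin n → Fin m × Fin m`
(each edge is an ordered pair (initial vertex, terminal vertex)) is simple if it has no
self-loops and any two vertices are connected by at most one edge (in either direction). -/
def IsSimpleDigraph {m n : ℕ} (E : Fin n → Fin m × Fin m) : Prop :=
  (∀ j, (E j).1 ≠ (E j).2) ∧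
  ∀ j k, j ≠ k → E j ≠ E k ∧ E j ≠ ((E k).2, (E k).1)

/-- The incidence matrix `A ∈ ℝ^{m×n}` of a directed graph:
`A i j = -1` if `v i` is the initial vertex of edge `j`, `1` if it is the terminal vertex,
`0` otherwise. -/
def IncMatrix {m n : ℕ} (E : Fin n → Fin m × Fin m) : Matrix (Fin m) (Fin n) ℝ :=
  Matrix.of fun i j => if (E j).1 = i then -1 else if (E j).2 = i then 1 else 0

/-- Cyclic successor on `Fin len`. -/
def cyc {len : ℕ} (i : Fin len) : Fin len := ⟨(i.1 + 1) % len, Nat.mod_lt _ i.pos⟩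

/-- A simple cycle of the directed graph `E`: a cyclic sequence of at least 3 distinct
vertices, each consecutive pair being joined by an edge (traversed in either direction). -/
structure SimpleCycleIn (m n : ℕ) (E : Fin n → Fin m × Fin m) where
  len : ℕ
  hlen : 3 ≤ len
  vert : Fin len → Fin m
  inj : Function.Injective vert
  edges : ∀ i : Fin len, ∃ j : Fin n,
    E j = (vert i, vert (cyc i)) ∨ E j = (vert (cyc i), vert i)

/-- The signed characteristic vector `w(C) ∈ {-1,0,1}ⁿ` of an oriented simple cycle:
`+1` on edges traversed forward, `-1` on edges traversed backward, `0` elsewhere. -/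
noncomputable def sChar {m n : ℕ} {E : Fin n → Fin m × Fin m}
    (C : SimpleCycleIn m n E) : Fin n → ℝ := fun j =>
  if ∃ i, E j = (C.vert i, C.vert (cyc i)) then 1
  else if ∃ i, E j = (C.vert (cyc i), C.vert i) then -1 else 0

/-- `W₁(G)`: the set of ℓ₁-normalized signed characteristic vectors of simple cycles. -/
noncomputable def W1 {m n : ℕ} (E : Fin n → Fin m × Fin m) : Set (Fin n → ℝ) :=
  {x | ∃ C : SimpleCycleIn m n E, x = (l1 (sChar C))⁻¹ • sChar C}

/-! ### auxiliary -/

namespace Aux9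

lemma l1_nonneg {n : ℕ} (x : Fin n → ℝ) : 0 ≤ l1 x :=
  Finset.sum_nonneg fun _ _ => abs_nonneg _

lemma l1_smul {n : ℕ} (c : ℝ) (x : Fin n → ℝ) : l1 (c • x) = |c| * l1 x := by
  simp [l1, Finset.mul_sum, abs_mul]

lemma l1_pos {n : ℕ} {x : Fin n → ℝ} (hx : x ≠ 0) : 0 < l1 x := by
  obtain ⟨j, hj⟩ : ∃ j, x j ≠ 0 := by
    by_contra h; push_neg at h; exact hx (funext h)
  exact Finset.sum_pos' (fun _ _ => abs_nonneg _)
    ⟨j, Finset.mem_univ _, abs_pos.mpr hj⟩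

lemma mod_cases {len a : ℕ} (h : a < len) :
    (a+1) % len = a+1 ∧ a+1 < len ∨ (a+1) % len = 0 ∧ a + 1 = len := by
  rcases lt_or_eq_of_le (Nat.succ_le_of_lt h) with h'|h'
  · exact Or.inl ⟨Nat.mod_eq_of_lt h', h'⟩
  · exact Or.inr ⟨by rw [show a+1 = len from h', Nat.mod_self], h'⟩

def prv {len : ℕ} (i : Fin len) : Fin len := ⟨(i.1 + (len-1)) % len, Nat.mod_lt _ i.pos⟩

lemma cyc_prv {len : ℕ} (i : Fin len) : cyc (prv i) = i := by
  have h1 : i.1 + (len-1) + 1 = i.1 + len := by have := i.2; omega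
  apply Fin.ext
  simp only [cyc, prv]
  rw [Nat.mod_add_mod, h1, Nat.add_mod_right, Nat.mod_eq_of_lt i.2]

lemma prv_cyc {len : ℕ} (i : Fin len) : prv (cyc i) = i := by
  have h1 : i.1 + 1 + (len-1) = i.1 + len := by have := i.2; omega
  apply Fin.ext
  simp only [cyc, prv]
  rw [Nat.mod_add_mod, h1, Nat.add_mod_right, Nat.mod_eq_of_lt i.2]

lemma cyc_inj {len : ℕ} : Function.Injective (cyc : Fin len → Fin len) :=
  Function.LeftInverse.injective prv_cyc

lemma cyc_ne_self {len : ℕ} (h : 2 ≤ len) (i : Fin len) : cyc i ≠ i := by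
  intro hc
  have := congrArg Fin.val hc
  simp only [cyc] at this
  rcases mod_cases i.2 with ⟨h1,h2⟩|⟨h1,h2⟩ <;> rw [h1] at this <;> omega

lemma cyc_cyc_ne {len : ℕ} (h : 3 ≤ len) (i : Fin len) : cyc (cyc i) ≠ i := by
  intro hc
  have := congrArg Fin.val hc
  simp only [cyc] at this
  rcases mod_cases i.2 with ⟨h1,h2⟩|⟨h1,h2⟩ <;> rw [h1] at this
  · rcases mod_cases h2 with ⟨h3,h4⟩|⟨h3,h4⟩ <;> rw [h3] at this <;> omega
  · have h3 : (0 + 1) % len = 1 := Nat.mod_eq_of_lt (by omega)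
    rw [h3] at this; omega

lemma prv_ne_self {len : ℕ} (h : 2 ≤ len) (i : Fin len) : prv i ≠ i := by
  intro hc
  have := cyc_ne_self h i
  rw [← hc, cyc_prv] at this
  exact this hc.symm

variable {m n : ℕ} {E : Fin n → Fin m × Fin m}

lemma edge_unique' (hs : IsSimpleDigraph E) {j k : Fin n} {a b : Fin m}
    (hj : E j = (a,b) ∨ E j = (b,a)) (hk : E k = (a,b) ∨ E k = (b,a)) : j = k := by
  by_contra hne
  rcases hs.2 j k hne with ⟨h1,h2⟩
  rcases hj with h|h <;> rcases hk with h'|h' <;> simp [h, h'] at h1 h2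

noncomputable def cedge (C : SimpleCycleIn m n E) (i : Fin C.len) : Fin n :=
  (C.edges i).choose

lemma cedge_spec (C : SimpleCycleIn m n E) (i : Fin C.len) :
    E (cedge C i) = (C.vert i, C.vert (cyc i)) ∨
    E (cedge C i) = (C.vert (cyc i), C.vert i) :=
  (C.edges i).choose_spec

lemma not_both (C : SimpleCycleIn m n E) {j : Fin n}
    (h1 : ∃ i, E j = (C.vert i, C.vert (cyc i)))
    (h2 : ∃ i, E j = (C.vert (cyc i), C.vert i)) : False := by
  obtain ⟨i, hi⟩ := h1
  obtain ⟨i', hi'⟩ := h2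
  rw [hi] at hi'
  obtain ⟨e1, e2⟩ := Prod.mk.injEq .. ▸ hi'
  have hi1 : i = cyc i' := C.inj e1
  have hi2 : cyc i = i' := C.inj e2
  exact cyc_cyc_ne C.hlen i' (by rw [← hi1, hi2])

lemma sChar_cedge_fwd {C : SimpleCycleIn m n E} {i : Fin C.len}
    (h : E (cedge C i) = (C.vert i, C.vert (cyc i))) : sChar C (cedge C i) = 1 := by
  simp only [sChar]
  rw [if_pos ⟨i, h⟩]

lemma sChar_cedge_bwd {C : SimpleCycleIn m n E} {i : Fin C.len}
    (h : E (cedge C i) = (C.vert (cyc i), C.vert i)) : sChar C (cedge C i) = -1 := by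
  simp only [sChar]
  rw [if_neg (fun h1 => not_both C h1 ⟨i, h⟩), if_pos ⟨i, h⟩]

lemma abs_sChar_cedge {C : SimpleCycleIn m n E} (i : Fin C.len) :
    |sChar C (cedge C i)| = 1 := by
  rcases cedge_spec C i with h|h
  · rw [sChar_cedge_fwd h]; norm_num
  · rw [sChar_cedge_bwd h]; norm_num

lemma sChar_support (hs : IsSimpleDigraph E) (C : SimpleCycleIn m n E) {j : Fin n}
    (h : sChar C j ≠ 0) : ∃ i, j = cedge C i := by
  simp only [sChar] at h
  by_cases h1 : ∃ i, E j = (C.vert i, C.vert (cyc i))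
  · obtain ⟨i, hi⟩ := h1
    exact ⟨i, edge_unique' hs (Or.inl hi) (cedge_spec C i)⟩
  by_cases h2 : ∃ i, E j = (C.vert (cyc i), C.vert i)
  · obtain ⟨i, hi⟩ := h2
    refine ⟨i, edge_unique' hs (Or.inr hi) (cedge_spec C i)⟩
  · rw [if_neg h1, if_neg h2] at h; exact absurd rfl h

lemma cedge_inj (hs : IsSimpleDigraph E) (C : SimpleCycleIn m n E) :
    Function.Injective (cedge C) := by
  intro i i' h
  have hi := cedge_spec C i
  have hi' := cedge_spec C i'
  rw [h] at hi
  rcases hi with h1|h1 <;> rcases hi' with h2|h2 <;> rw [h1] at h2 <;>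
    obtain ⟨e1, e2⟩ := Prod.mk.injEq .. ▸ h2
  · exact C.inj e1
  · exact absurd (by rw [C.inj e2, ← C.inj e1]) (cyc_cyc_ne C.hlen i)
  · exact absurd (by rw [← C.inj e2]; exact C.inj e1) (cyc_cyc_ne C.hlen i')
  · exact C.inj e2

lemma l1_neg {N : ℕ} (x : Fin N → ℝ) : l1 (-x) = l1 x := by simp [l1]

lemma l1_sChar (hs : IsSimpleDigraph E) (C : SimpleCycleIn m n E) :
    l1 (sChar C) = (C.len : ℝ) := by
  classical
  have hsub : Finset.univ.image (cedge C) ⊆ Finset.univ := Finset.subset_univ _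
  have h0 : l1 (sChar C) = ∑ j ∈ Finset.univ.image (cedge C), |sChar C j| := by
    refine (Finset.sum_subset hsub ?_).symm
    intro j _ hj
    by_contra h
    obtain ⟨i, hi⟩ := sChar_support hs C (fun h0 => h (by rw [h0]; simp))
    exact hj (Finset.mem_image.mpr ⟨i, Finset.mem_univ _, hi.symm⟩)
  rw [h0, Finset.sum_image (fun a _ b _ h => cedge_inj hs C h)]
  simp [abs_sChar_cedge]

lemma incMatrix_apply_of_ne {v : Fin m} {j : Fin n}
    (h1 : (E j).1 ≠ v) (h2 : (E j).2 ≠ v) : IncMatrix E v j = 0 := by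
  simp [IncMatrix, h1, h2]

lemma vert_cyc_ne (C : SimpleCycleIn m n E) (i : Fin C.len) :
    C.vert (cyc i) ≠ C.vert i :=
  fun h => cyc_ne_self (by have := C.hlen; omega) i (C.inj h)

lemma term_at_base (C : SimpleCycleIn m n E) (i : Fin C.len) :
    IncMatrix E (C.vert i) (cedge C i) * sChar C (cedge C i) = -1 := by
  rcases cedge_spec C i with h|h
  · rw [sChar_cedge_fwd h]; simp [IncMatrix, h]
  · rw [sChar_cedge_bwd h]; simp [IncMatrix, h, vert_cyc_ne C i]

lemma term_at_cyc (C : SimpleCycleIn m n E) (i : Fin C.len) :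
    IncMatrix E (C.vert (cyc i)) (cedge C i) * sChar C (cedge C i) = 1 := by
  have hne : C.vert i ≠ C.vert (cyc i) := (vert_cyc_ne C i).symm
  rcases cedge_spec C i with h|h
  · rw [sChar_cedge_fwd h]; simp [IncMatrix, h, hne]
  · rw [sChar_cedge_bwd h]; simp [IncMatrix, h]

lemma zero_term (hs : IsSimpleDigraph E) (C : SimpleCycleIn m n E) {v : Fin m} {j : Fin n}
    (h : ∀ i : Fin C.len, j = cedge C i → C.vert i ≠ v ∧ C.vert (cyc i) ≠ v) :
    IncMatrix E v j * sChar C j = 0 := by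
  by_cases h0 : sChar C j = 0
  · rw [h0, mul_zero]
  obtain ⟨i, hi⟩ := sChar_support hs C h0
  obtain ⟨n1, n2⟩ := h i hi
  rw [hi] at *
  rcases cedge_spec C i with he|he
  · rw [incMatrix_apply_of_ne (by rw [he]; exact n1) (by rw [he]; exact n2), zero_mul]
  · rw [incMatrix_apply_of_ne (by rw [he]; exact n2) (by rw [he]; exact n1), zero_mul]

lemma mulVec_sChar (hs : IsSimpleDigraph E) (C : SimpleCycleIn m n E) :
    (IncMatrix E).mulVec (sChar C) = 0 := by
  classical
  funext v
  show ∑ j, IncMatrix E v j * sChar C j = 0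
  by_cases hv : ∃ k, C.vert k = v
  · obtain ⟨k, rfl⟩ := hv
    have h2 : (2:ℕ) ≤ C.len := by have := C.hlen; omega
    have hne : cedge C (prv k) ≠ cedge C k :=
      fun h => prv_ne_self h2 k (cedge_inj hs C h)
    rw [Finset.sum_eq_add_of_mem (cedge C (prv k)) (cedge C k)
      (Finset.mem_univ _) (Finset.mem_univ _) hne ?_]
    · have t1 : IncMatrix E (C.vert k) (cedge C (prv k)) * sChar C (cedge C (prv k)) = 1 := by
        have := term_at_cyc C (prv k)
        rwa [cyc_prv] at this
      rw [t1, term_at_base C k]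
      ring
    · intro j _ ⟨hja, hjb⟩
      refine zero_term hs C (fun i hi => ⟨?_, ?_⟩)
      · intro hvi
        exact hjb (by rw [hi, C.inj hvi])
      · intro hvi
        refine hja ?_
        have : i = prv k := by rw [← C.inj hvi, prv_cyc]
        rw [hi, this]
  · push_neg at hv
    refine Finset.sum_eq_zero fun j _ =>
      zero_term hs C (fun i _ => ⟨hv i, hv (cyc i)⟩)

/-! ### reversed cycle -/

def negF {len : ℕ} (i : Fin len) : Fin len := ⟨len - 1 - i.1, by have := i.2; omega⟩

lemma negF_negF {len : ℕ} (i : Fin len) : negF (negF i) = i := by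
  apply Fin.ext; have := i.2; simp only [negF]; omega

lemma negF_cyc {len : ℕ} (i : Fin len) : negF (cyc i) = prv (negF i) := by
  apply Fin.ext
  have hl := i.2
  simp only [negF, cyc, prv]
  rcases mod_cases i.2 with ⟨h1,h2⟩|⟨h1,h2⟩ <;> rw [h1]
  · have e : (len-1-i.1) + (len-1) = len + (len-2-i.1) := by omega
    rw [e, Nat.add_mod_left, Nat.mod_eq_of_lt (by omega)]
    omega
  · have e : (len-1-i.1) + (len-1) = len-1 := by omega
    rw [e, Nat.mod_eq_of_lt (by omega)]
    omega

def revCycle (C : SimpleCycleIn m n E) : SimpleCycleIn m n E where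
  len := C.len
  hlen := C.hlen
  vert i := C.vert (negF i)
  inj a b h := by
    have h1 := congrArg negF (C.inj h)
    rwa [negF_negF, negF_negF] at h1
  edges i := by
    obtain ⟨j, hj⟩ := C.edges (prv (negF i))
    rw [cyc_prv] at hj
    refine ⟨j, ?_⟩
    show E j = (C.vert (negF i), C.vert (negF (cyc i))) ∨
      E j = (C.vert (negF (cyc i)), C.vert (negF i))
    rw [negF_cyc]
    exact hj.symm

lemma rev_vert (C : SimpleCycleIn m n E) (i : Fin (revCycle C).len) :
    (revCycle C).vert i = C.vert (negF i) := rfl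

lemma sChar_rev (C : SimpleCycleIn m n E) : sChar (revCycle C) = -sChar C := by
  funext j
  have key1 : (∃ i, E j = ((revCycle C).vert i, (revCycle C).vert (cyc i))) ↔
      (∃ i, E j = (C.vert (cyc i), C.vert i)) := by
    constructor
    · rintro ⟨i, hi⟩
      refine ⟨prv (negF i), ?_⟩
      rw [cyc_prv]
      exact hi.trans (Prod.ext rfl (congrArg C.vert (negF_cyc (len := C.len) i)))
    · rintro ⟨q, hq⟩
      refine ⟨negF (cyc q), ?_⟩
      show E j = (C.vert (negF (negF (cyc q))), C.vert (negF (cyc (negF (cyc q)))))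
      rw [negF_negF, negF_cyc, negF_negF, prv_cyc]
      exact hq
  have key2 : (∃ i, E j = ((revCycle C).vert (cyc i), (revCycle C).vert i)) ↔
      (∃ i, E j = (C.vert i, C.vert (cyc i))) := by
    constructor
    · rintro ⟨i, hi⟩
      refine ⟨prv (negF i), ?_⟩
      rw [cyc_prv]
      exact hi.trans (Prod.ext (congrArg C.vert (negF_cyc (len := C.len) i)) rfl)
    · rintro ⟨q, hq⟩
      refine ⟨negF (cyc q), ?_⟩
      show E j = (C.vert (negF (cyc (negF (cyc q)))), C.vert (negF (negF (cyc q))))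
      rw [negF_negF, negF_cyc, negF_negF, prv_cyc]
      exact hq
  by_cases h1 : ∃ i, E j = (C.vert i, C.vert (cyc i)) <;>
    by_cases h2 : ∃ i, E j = (C.vert (cyc i), C.vert i)
  · exact absurd h2 (fun h => not_both C h1 h)
  · simp only [sChar, Pi.neg_apply]
    rw [if_neg (fun h => h2 (key1.mp h)), if_pos (key2.mpr h1), if_pos h1]
  · simp only [sChar, Pi.neg_apply]
    rw [if_pos (key1.mpr h2), if_neg h1, if_pos h2]
    norm_num
  · simp only [sChar, Pi.neg_apply]
    rw [if_neg (fun h => h2 (key1.mp h)), if_neg (fun h => h1 (key2.mp h)),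
      if_neg h1, if_neg h2]
    norm_num

/-! ### flow constancy on a cycle support -/

lemma zero_term' (hs : IsSimpleDigraph E) (C : SimpleCycleIn m n E) {v : Fin m}
    {x : Fin n → ℝ} (hsupp : ∀ j, (∀ i, j ≠ cedge C i) → x j = 0) {j : Fin n}
    (h : ∀ i : Fin C.len, j = cedge C i → C.vert i ≠ v ∧ C.vert (cyc i) ≠ v) :
    IncMatrix E v j * x j = 0 := by
  by_cases h0 : x j = 0
  · rw [h0, mul_zero]
  obtain ⟨i, hi⟩ : ∃ i, j = cedge C i := by
    by_contra hc; push_neg at hc; exact h0 (hsupp j hc)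
  obtain ⟨n1, n2⟩ := h i hi
  rw [hi] at *
  rcases cedge_spec C i with he|he
  · rw [incMatrix_apply_of_ne (by rw [he]; exact n1) (by rw [he]; exact n2), zero_mul]
  · rw [incMatrix_apply_of_ne (by rw [he]; exact n2) (by rw [he]; exact n1), zero_mul]

lemma sChar_sq (C : SimpleCycleIn m n E) (i : Fin C.len) :
    sChar C (cedge C i) * sChar C (cedge C i) = 1 := by
  rw [← abs_mul_abs_self, abs_sChar_cedge]; norm_num

lemma g_step (hs : IsSimpleDigraph E) (C : SimpleCycleIn m n E) {x : Fin n → ℝ}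
    (hx : (IncMatrix E).mulVec x = 0)
    (hsupp : ∀ j, (∀ i, j ≠ cedge C i) → x j = 0) (i : Fin C.len) :
    sChar C (cedge C (cyc i)) * x (cedge C (cyc i)) =
      sChar C (cedge C i) * x (cedge C i) := by
  classical
  have h2 : (2:ℕ) ≤ C.len := by have := C.hlen; omega
  have hv : (∑ j, IncMatrix E (C.vert (cyc i)) j * x j) = 0 := congrFun hx _
  have hne : cedge C i ≠ cedge C (cyc i) :=
    fun h => cyc_ne_self h2 i (cedge_inj hs C h).symm
  rw [Finset.sum_eq_add_of_mem (cedge C i) (cedge C (cyc i))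
    (Finset.mem_univ _) (Finset.mem_univ _) hne ?_] at hv
  · have hA1 : IncMatrix E (C.vert (cyc i)) (cedge C i) = sChar C (cedge C i) := by
      have t := term_at_cyc C i
      calc IncMatrix E (C.vert (cyc i)) (cedge C i)
          = IncMatrix E (C.vert (cyc i)) (cedge C i) *
              (sChar C (cedge C i) * sChar C (cedge C i)) := by rw [sChar_sq]; ring
        _ = (IncMatrix E (C.vert (cyc i)) (cedge C i) * sChar C (cedge C i)) *
              sChar C (cedge C i) := by ring
        _ = sChar C (cedge C i) := by rw [t, one_mul]
    have hA2 : IncMatrix E (C.vert (cyc i)) (cedge C (cyc i)) =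
        -sChar C (cedge C (cyc i)) := by
      have t := term_at_base C (cyc i)
      calc IncMatrix E (C.vert (cyc i)) (cedge C (cyc i))
          = IncMatrix E (C.vert (cyc i)) (cedge C (cyc i)) *
              (sChar C (cedge C (cyc i)) * sChar C (cedge C (cyc i))) := by
            rw [sChar_sq]; ring
        _ = (IncMatrix E (C.vert (cyc i)) (cedge C (cyc i)) *
              sChar C (cedge C (cyc i))) * sChar C (cedge C (cyc i)) := by ring
        _ = -sChar C (cedge C (cyc i)) := by rw [t]; ring
    rw [hA1, hA2] at hv
    linarith
  · intro j _ ⟨hja, hjb⟩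
    refine zero_term' hs C hsupp (fun i' hi' => ⟨?_, ?_⟩)
    · intro hvi
      have : i' = cyc i := C.inj hvi
      exact hjb (by rw [hi', this])
    · intro hvi
      have : i' = i := cyc_inj (C.inj hvi)
      exact hja (by rw [hi', this])

lemma g_const (hs : IsSimpleDigraph E) (C : SimpleCycleIn m n E) {x : Fin n → ℝ}
    (hx : (IncMatrix E).mulVec x = 0)
    (hsupp : ∀ j, (∀ i, j ≠ cedge C i) → x j = 0) (i : Fin C.len) :
    sChar C (cedge C i) * x (cedge C i) =
      sChar C (cedge C ⟨0, by have := C.hlen; omega⟩) *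
        x (cedge C ⟨0, by have := C.hlen; omega⟩) := by
  obtain ⟨k, hk⟩ := i
  induction k with
  | zero => rfl
  | succ p ih =>
    have hp : p < C.len := by omega
    have hcyc : (⟨p+1, hk⟩ : Fin C.len) = cyc ⟨p, hp⟩ := by
      apply Fin.ext
      simp only [cyc]
      rw [Nat.mod_eq_of_lt hk]
    rw [hcyc, g_step hs C hx hsupp ⟨p, hp⟩, ih hp]

lemma l1_eq_sum_cedge (hs : IsSimpleDigraph E) (C : SimpleCycleIn m n E) {x : Fin n → ℝ}
    (hsupp : ∀ j, (∀ i, j ≠ cedge C i) → x j = 0) :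
    l1 x = ∑ i : Fin C.len, |x (cedge C i)| := by
  classical
  have h0 : l1 x = ∑ j ∈ Finset.univ.image (cedge C), |x j| := by
    refine (Finset.sum_subset (Finset.subset_univ _) ?_).symm
    intro j _ hj
    have : ∀ i, j ≠ cedge C i := by
      intro i hi
      exact hj (Finset.mem_image.mpr ⟨i, Finset.mem_univ _, hi.symm⟩)
    rw [hsupp j this, abs_zero]
  rw [h0, Finset.sum_image (fun a _ b _ h => cedge_inj hs C h)]
/-! ### W1 consists of extreme points -/

set_option maxHeartbeats 2000000 in
lemma W1_subset_extreme (hs : IsSimpleDigraph E) :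
    W1 E ⊆ Set.extremePoints ℝ
      ({η : Fin n → ℝ | (IncMatrix E).mulVec η = 0} ∩ {x | l1 x ≤ 1}) := by
  rintro _ ⟨C, rfl⟩
  have hL : l1 (sChar C) = (C.len : ℝ) := l1_sChar hs C
  have hLpos : (0:ℝ) < (C.len : ℝ) :=
    Nat.cast_pos.mpr (by have := C.hlen; omega)
  have hmulw : (IncMatrix E).mulVec (sChar C) = 0 := mulVec_sChar hs C
  set L : ℝ := (C.len : ℝ) with hLdef
  set wb : Fin n → ℝ := (l1 (sChar C))⁻¹ • sChar C with hwb
  have hwbj : ∀ j, wb j = L⁻¹ * sChar C j := by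
    intro j; rw [hwb, hL]; simp [mul_comm]
  have hl1wb : l1 wb = 1 := by
    rw [hwb, l1_smul, hL, abs_of_nonneg (inv_nonneg.mpr hLpos.le),
      inv_mul_cancel₀ (ne_of_gt hLpos)]
  refine ⟨⟨?_, ?_⟩, ?_⟩
  · show (IncMatrix E).mulVec wb = 0
    rw [hwb, Matrix.mulVec_smul, hmulw, smul_zero]
  · show l1 wb ≤ 1
    rw [hl1wb]
  rintro x ⟨hx0, hx1⟩ y ⟨hy0, hy1⟩ ⟨a, b, ha, hb, hab, habxy⟩
  simp only [Set.mem_setOf_eq] at hx0 hx1 hy0 hy1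
  have hxyj : ∀ j, wb j = a * x j + b * y j := by
    intro j; rw [← habxy]; simp
  -- termwise triangle inequality
  have htri : ∀ j, |wb j| ≤ a * |x j| + b * |y j| := by
    intro j
    rw [hxyj j]
    calc |a * x j + b * y j| ≤ |a * x j| + |b * y j| := abs_add_le _ _
      _ = a * |x j| + b * |y j| := by
          rw [abs_mul, abs_mul, abs_of_pos ha, abs_of_pos hb]
  have hsum1 : ∑ j, (a * |x j| + b * |y j|) = a * l1 x + b * l1 y := by
    rw [Finset.sum_add_distrib, ← Finset.mul_sum, ← Finset.mul_sum]; rfl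
  have hub : a * l1 x + b * l1 y ≤ 1 := by nlinarith
  have hlb : (1:ℝ) ≤ ∑ j, (a * |x j| + b * |y j|) := by
    rw [← hl1wb]
    exact Finset.sum_le_sum (fun j _ => htri j)
  have hsumeq : ∑ j, (a * |x j| + b * |y j| - |wb j|) = 0 := by
    rw [Finset.sum_sub_distrib, hsum1]
    have : ∑ j, |wb j| = l1 wb := rfl
    rw [this, hl1wb]
    rw [hsum1] at hlb
    linarith
  have hterm : ∀ j, a * |x j| + b * |y j| = |wb j| := by
    intro j
    have := (Finset.sum_eq_zero_iff_of_nonneg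
      (fun j _ => by linarith [htri j])).mp hsumeq j (Finset.mem_univ j)
    linarith
  -- supports
  have hsuppx : ∀ j, (∀ i, j ≠ cedge C i) → x j = 0 := by
    intro j hj
    have hschar : sChar C j = 0 := by
      by_contra h
      obtain ⟨i, hi⟩ := sChar_support hs C h
      exact hj i hi
    have hwj0 : wb j = 0 := by rw [hwbj j, hschar, mul_zero]
    have ht := hterm j
    rw [hwj0, abs_zero] at ht
    have : |x j| = 0 := by nlinarith [abs_nonneg (x j), abs_nonneg (y j)]
    exact abs_eq_zero.mp this
  have hsuppy : ∀ j, (∀ i, j ≠ cedge C i) → y j = 0 := by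
    intro j hj
    have hschar : sChar C j = 0 := by
      by_contra h
      obtain ⟨i, hi⟩ := sChar_support hs C h
      exact hj i hi
    have hwj0 : wb j = 0 := by rw [hwbj j, hschar, mul_zero]
    have ht := hterm j
    rw [hwj0, abs_zero] at ht
    have : |y j| = 0 := by nlinarith [abs_nonneg (x j), abs_nonneg (y j)]
    exact abs_eq_zero.mp this
  -- sign alignment
  have halign : ∀ i : Fin C.len,
      sChar C (cedge C i) * x (cedge C i) = |x (cedge C i)| ∧
      sChar C (cedge C i) * y (cedge C i) = |y (cedge C i)| := by
    intro i
    have hs2 := sChar_sq C i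
    have habs := abs_sChar_cedge (C := C) i
    have h5 : sChar C (cedge C i) * wb (cedge C i) = |wb (cedge C i)| := by
      rw [hwbj]
      rw [abs_mul, abs_of_nonneg (inv_nonneg.mpr hLpos.le), habs]
      calc sChar C (cedge C i) * (L⁻¹ * sChar C (cedge C i))
          = L⁻¹ * (sChar C (cedge C i) * sChar C (cedge C i)) := by ring
        _ = L⁻¹ * 1 := by rw [hs2]
    have h6 : sChar C (cedge C i) * wb (cedge C i) =
        a * (sChar C (cedge C i) * x (cedge C i)) +
        b * (sChar C (cedge C i) * y (cedge C i)) := by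
      rw [hxyj]; ring
    have hxle : sChar C (cedge C i) * x (cedge C i) ≤ |x (cedge C i)| := by
      calc sChar C (cedge C i) * x (cedge C i) ≤ |sChar C (cedge C i) * x (cedge C i)| :=
            le_abs_self _
        _ = |x (cedge C i)| := by rw [abs_mul, habs, one_mul]
    have hyle : sChar C (cedge C i) * y (cedge C i) ≤ |y (cedge C i)| := by
      calc sChar C (cedge C i) * y (cedge C i) ≤ |sChar C (cedge C i) * y (cedge C i)| :=
            le_abs_self _
        _ = |y (cedge C i)| := by rw [abs_mul, habs, one_mul]
    have ht := hterm (cedge C i)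
    constructor <;> nlinarith
  -- l1 x = 1, l1 y = 1
  have hl1x : l1 x = 1 := by
    have h7 : a * l1 x + b * l1 y = 1 := by
      have : ∑ j, (a * |x j| + b * |y j|) = ∑ j, |wb j| :=
        Finset.sum_congr rfl (fun j _ => hterm j)
      rw [hsum1] at this
      have h8 : ∑ j, |wb j| = l1 wb := rfl
      rw [h8, hl1wb] at this
      exact this
    have h12 : a * l1 x ≥ a * 1 := by nlinarith
    have h13 : l1 x ≥ 1 := le_of_mul_le_mul_left (by linarith) ha
    linarith
  -- conclude x = wb
  have key : ∀ z : Fin n → ℝ, (∀ j, (∀ i, j ≠ cedge C i) → z j = 0) →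
      ((IncMatrix E).mulVec z = 0) → (l1 z = 1) →
      (∀ i : Fin C.len, sChar C (cedge C i) * z (cedge C i) = |z (cedge C i)|) →
      z = wb := by
    intro z hsupp hz0 hz1 hal
    set i0 : Fin C.len := ⟨0, by have := C.hlen; omega⟩ with hi0
    have hconst : ∀ i : Fin C.len, |z (cedge C i)| = |z (cedge C i0)| := by
      intro i
      rw [← hal i, ← hal i0]
      exact g_const hs C hz0 hsupp i
    have hsum : l1 z = (C.len : ℝ) * |z (cedge C i0)| := by
      rw [l1_eq_sum_cedge hs C hsupp]
      rw [Finset.sum_congr rfl (fun i _ => hconst i), Finset.sum_const]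
      simp [mul_comm]
    rw [hz1] at hsum
    have hc : |z (cedge C i0)| = L⁻¹ :=
      eq_inv_of_mul_eq_one_right hsum.symm
    funext j
    by_cases hj : ∃ i, j = cedge C i
    · obtain ⟨i, rfl⟩ := hj
      have h9 := hal i
      have h10 : |z (cedge C i)| = L⁻¹ := by rw [hconst i, hc]
      have hs2 := sChar_sq C i
      have : z (cedge C i) = sChar C (cedge C i) * L⁻¹ := by
        calc z (cedge C i)
            = (sChar C (cedge C i) * sChar C (cedge C i)) * z (cedge C i) := by
              rw [hs2, one_mul]
          _ = sChar C (cedge C i) * (sChar C (cedge C i) * z (cedge C i)) := by ring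
          _ = sChar C (cedge C i) * L⁻¹ := by rw [h9, h10]
      rw [this, hwbj]
      ring
    · push_neg at hj
      rw [hsupp j hj, hwbj]
      have hschar : sChar C j = 0 := by
        by_contra h
        obtain ⟨i, hi⟩ := sChar_support hs C h
        exact hj i hi
      rw [hschar, mul_zero]
  have hx : x = wb :=
    key x hsuppx hx0 hl1x (fun i => (halign i).1)
  exact hx
/-! ### existence of a cycle in the support of a null vector -/

lemma deg2 (hs : IsSimpleDigraph E) {x : Fin n → ℝ}
    (hx0 : (IncMatrix E).mulVec x = 0) {v : Fin m} {j : Fin n}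
    (hxj : x j ≠ 0) (hv : (E j).1 = v ∨ (E j).2 = v) :
    ∃ j', j' ≠ j ∧ x j' ≠ 0 ∧ ((E j').1 = v ∨ (E j').2 = v) := by
  classical
  by_contra hc
  push_neg at hc
  have hv0 : (∑ j', IncMatrix E v j' * x j') = 0 := congrFun hx0 v
  rw [Finset.sum_eq_single j ?_ (fun h => absurd (Finset.mem_univ j) h)] at hv0
  · rcases hv with h1|h1
    · have h2 : (E j).2 ≠ v := by rw [← h1]; exact (hs.1 j).symm
      rw [show IncMatrix E v j = -1 by simp [IncMatrix, h1]] at hv0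
      exact hxj (by linarith)
    · have h2 : (E j).1 ≠ v := by rw [← h1]; exact hs.1 j
      rw [show IncMatrix E v j = 1 by simp [IncMatrix, h1, h2]] at hv0
      exact hxj (by linarith)
  · intro b _ hbj
    by_cases hxb : x b = 0
    · rw [hxb, mul_zero]
    · have := hc b hbj hxb
      rw [incMatrix_apply_of_ne this.1 this.2, zero_mul]

/-- State of the non-backtracking walk: an edge with nonzero value and one
of its endpoints (the "head"). -/
def WSt (E : Fin n → Fin m × Fin m) (x : Fin n → ℝ) : Type :=
  {p : Fin n × Fin m // x p.1 ≠ 0 ∧ ((E p.1).1 = p.2 ∨ (E p.1).2 = p.2)}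

noncomputable def stepj (hs : IsSimpleDigraph E) {x : Fin n → ℝ}
    (hx0 : (IncMatrix E).mulVec x = 0) (s : WSt E x) : Fin n :=
  (deg2 hs hx0 s.2.1 s.2.2).choose

lemma stepj_spec (hs : IsSimpleDigraph E) {x : Fin n → ℝ}
    (hx0 : (IncMatrix E).mulVec x = 0) (s : WSt E x) :
    stepj hs hx0 s ≠ s.1.1 ∧ x (stepj hs hx0 s) ≠ 0 ∧
      ((E (stepj hs hx0 s)).1 = s.1.2 ∨ (E (stepj hs hx0 s)).2 = s.1.2) :=
  (deg2 hs hx0 s.2.1 s.2.2).choose_spec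

noncomputable def stepW (hs : IsSimpleDigraph E) {x : Fin n → ℝ}
    (hx0 : (IncMatrix E).mulVec x = 0) (s : WSt E x) : WSt E x :=
  ⟨(stepj hs hx0 s,
    if (E (stepj hs hx0 s)).1 = s.1.2 then (E (stepj hs hx0 s)).2
      else (E (stepj hs hx0 s)).1),
   (stepj_spec hs hx0 s).2.1, by
    dsimp only
    split
    · exact Or.inr rfl
    · exact Or.inl rfl⟩

lemma stepW_spec (hs : IsSimpleDigraph E) {x : Fin n → ℝ}
    (hx0 : (IncMatrix E).mulVec x = 0) (s : WSt E x) :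
    (stepW hs hx0 s).1.1 ≠ s.1.1 ∧
    (E (stepW hs hx0 s).1.1 = (s.1.2, (stepW hs hx0 s).1.2) ∨
      E (stepW hs hx0 s).1.1 = ((stepW hs hx0 s).1.2, s.1.2)) ∧
    (stepW hs hx0 s).1.2 ≠ s.1.2 := by
  obtain ⟨hne, hx, hv⟩ := stepj_spec hs hx0 s
  have e1 : (stepW hs hx0 s).1.1 = stepj hs hx0 s := rfl
  have e2 : (stepW hs hx0 s).1.2 =
      (if (E (stepj hs hx0 s)).1 = s.1.2 then (E (stepj hs hx0 s)).2
        else (E (stepj hs hx0 s)).1) := rfl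
  rw [e1, e2]
  refine ⟨hne, ?_, ?_⟩
  · by_cases h1 : (E (stepj hs hx0 s)).1 = s.1.2
    · rw [if_pos h1]
      exact Or.inl (by rw [← h1])
    · rw [if_neg h1]
      have h2 : (E (stepj hs hx0 s)).2 = s.1.2 := hv.resolve_left h1
      exact Or.inr (by rw [← h2])
  · by_cases h1 : (E (stepj hs hx0 s)).1 = s.1.2
    · rw [if_pos h1, ← h1]
      exact (hs.1 _).symm
    · rw [if_neg h1]
      exact h1

noncomputable def walkW (hs : IsSimpleDigraph E) {x : Fin n → ℝ}
    (hx0 : (IncMatrix E).mulVec x = 0) (s0 : WSt E x) : ℕ → WSt E x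
  | 0 => s0
  | (k+1) => stepW hs hx0 (walkW hs hx0 s0 k)
lemma exists_cycle (hs : IsSimpleDigraph E) {x : Fin n → ℝ}
    (hx0 : (IncMatrix E).mulVec x = 0) (hxne : x ≠ 0) :
    ∃ C : SimpleCycleIn m n E, ∀ i, x (cedge C i) ≠ 0 := by
  classical
  obtain ⟨j0, hj0⟩ : ∃ j, x j ≠ 0 := by
    by_contra h; push_neg at h; exact hxne (funext h)
  set s0 : WSt E x := ⟨(j0, (E j0).2), hj0, Or.inr rfl⟩ with hs0
  set u : ℕ → Fin m :=
    fun k => Nat.casesOn k (E j0).1 (fun k' => (walkW hs hx0 s0 k').1.2) with hu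
  set ej : ℕ → Fin n := fun k => (walkW hs hx0 s0 k).1.1 with hej
  have hPx : ∀ k, x (ej k) ≠ 0 := fun k => (walkW hs hx0 s0 k).2.1
  have hP1 : ∀ k, E (ej k) = (u k, u (k+1)) ∨ E (ej k) = (u (k+1), u k) := by
    intro k
    cases k with
    | zero => exact Or.inl rfl
    | succ k' => exact (stepW_spec hs hx0 (walkW hs hx0 s0 k')).2.1
  have hP2 : ∀ k, u (k+1) ≠ u k := by
    intro k
    cases k with
    | zero => exact (hs.1 j0).symm
    | succ k' => exact (stepW_spec hs hx0 (walkW hs hx0 s0 k')).2.2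
  have hPe : ∀ k, ej (k+1) ≠ ej k := fun k => (stepW_spec hs hx0 (walkW hs hx0 s0 k)).1
  have hP3 : ∀ k, u (k+2) ≠ u k := by
    intro k hc
    have h1 := hP1 k
    have h2 := hP1 (k+1)
    rw [hc] at h2
    exact hPe k (edge_unique' hs h2.symm h1)
  have hpig : ∃ p q, p < q ∧ u p = u q := by
    have hcard : Fintype.card (Fin m) < Fintype.card (Fin (m+1)) := by simp
    obtain ⟨i1, i2, hne, heq⟩ :=
      Fintype.exists_ne_map_eq_of_card_lt (fun i : Fin (m+1) => u i.1) hcard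
    rcases lt_or_gt_of_ne (fun h : i1.1 = i2.1 => hne (Fin.ext h)) with h|h
    · exact ⟨i1.1, i2.1, h, heq⟩
    · exact ⟨i2.1, i1.1, h, heq.symm⟩
  have hQ : ∃ q, ∃ p, p < q ∧ u p = u q := by
    obtain ⟨p, q, h1, h2⟩ := hpig
    exact ⟨q, p, h1, h2⟩
  set b := Nat.find hQ with hbdef
  obtain ⟨a, hab, hua⟩ := Nat.find_spec hQ
  rw [← hbdef] at hab hua
  have hmin : ∀ p q, p < q → q < b → u p ≠ u q := by
    intro p q h1 h2 hc
    exact Nat.find_min hQ h2 ⟨p, h1, hc⟩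
  set len := b - a with hlendef
  have hlen3 : 3 ≤ len := by
    have h1 : len = 1 ∨ len = 2 ∨ 3 ≤ len := by omega
    rcases h1 with h1|h1|h1
    · have h2 : b = a + 1 := by omega
      rw [h2] at hua
      exact absurd hua.symm (hP2 a)
    · have h2 : b = a + 2 := by omega
      rw [h2] at hua
      exact absurd hua.symm (hP3 a)
    · exact h1
  have hinjv : Function.Injective (fun i : Fin len => u (a + i.1)) := by
    intro i i' h
    simp only at h
    have hi := i.2
    have hi' := i'.2
    apply Fin.ext
    rcases lt_trichotomy i.1 i'.1 with h'|h'|h'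
    · exact absurd h (hmin (a + i.1) (a + i'.1) (by omega) (by omega))
    · exact h'
    · exact absurd h.symm (hmin (a + i'.1) (a + i.1) (by omega) (by omega))
  have hwrap : ∀ k : ℕ, k < len → u (a + (k+1) % len) = u (a + k + 1) := by
    intro k hk
    rcases mod_cases (len := len) (a := k) hk with ⟨h1,_⟩|⟨h1,h2⟩
    · have h4 : a + (k+1) % len = a + k + 1 := by rw [h1]; omega
      exact congrArg u h4
    · rw [h1]
      have h3 : a + k + 1 = b := by omega
      rw [h3, Nat.add_zero]
      exact hua
  have hedg : ∀ i : Fin len, ∃ j, E j = (u (a + i.1), u (a + (cyc i).1)) ∨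
      E j = (u (a + (cyc i).1), u (a + i.1)) := by
    intro i
    refine ⟨ej (a + i.1), ?_⟩
    have h1 := hP1 (a + i.1)
    have h2 := hwrap i.1 i.2
    rw [← h2] at h1
    exact h1
  set C : SimpleCycleIn m n E := ⟨len, hlen3, fun i => u (a + i.1), hinjv, hedg⟩ with hC
  refine ⟨C, fun i => ?_⟩
  have hcs := cedge_spec C i
  have h1 := hP1 (a + i.1)
  have h2 := hwrap i.1 i.2
  rw [← h2] at h1
  have heq : cedge C i = ej (a + i.1) := edge_unique' hs hcs h1
  rw [heq]
  exact hPx _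
lemma abs_sChar_le_one (C : SimpleCycleIn m n E) (j : Fin n) : |sChar C j| ≤ 1 := by
  unfold sChar
  split_ifs <;> norm_num

set_option maxHeartbeats 2000000 in
lemma extreme_subset_W1 (hs : IsSimpleDigraph E)
    (hker : ∃ η : Fin n → ℝ, η ≠ 0 ∧ (IncMatrix E).mulVec η = 0) :
    Set.extremePoints ℝ ({η : Fin n → ℝ | (IncMatrix E).mulVec η = 0} ∩ {x | l1 x ≤ 1})
      ⊆ W1 E := by
  classical
  rintro x ⟨⟨hx0, hx1⟩, hext⟩
  simp only [Set.mem_setOf_eq] at hx0 hx1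
  -- x ≠ 0
  have hxne : x ≠ 0 := by
    rintro rfl
    obtain ⟨η, hη0, hηnull⟩ := hker
    have hc : 0 < l1 η := l1_pos hη0
    have hmem : ∀ c : ℝ, |c| = (l1 η)⁻¹ → (c • η) ∈
        ({η : Fin n → ℝ | (IncMatrix E).mulVec η = 0} ∩ {x | l1 x ≤ 1}) := by
      intro c hcabs
      refine ⟨?_, ?_⟩
      · show (IncMatrix E).mulVec (c • η) = 0
        rw [Matrix.mulVec_smul, hηnull, smul_zero]
      · show l1 (c • η) ≤ 1
        rw [l1_smul, hcabs, inv_mul_cancel₀ (ne_of_gt hc)]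
    have h1 := hmem (l1 η)⁻¹ (abs_of_nonneg (inv_nonneg.mpr hc.le))
    have h2 := hmem (-(l1 η)⁻¹) (by rw [abs_neg]; exact abs_of_nonneg (inv_nonneg.mpr hc.le))
    have hseg : (0 : Fin n → ℝ) ∈
        openSegment ℝ ((l1 η)⁻¹ • η) ((-(l1 η)⁻¹) • η) := by
      refine ⟨1/2, 1/2, by norm_num, by norm_num, by norm_num, ?_⟩
      funext j
      simp only [Pi.add_apply, Pi.smul_apply, smul_eq_mul, Pi.zero_apply]
      ring
    have := hext h1 h2 hseg
    have hη : η = 0 := by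
      have h3 : (l1 η)⁻¹ • η = (0 : Fin n → ℝ) := this
      have h4 := congrArg (fun z => l1 η • z) h3
      simp only [smul_smul, mul_inv_cancel₀ (ne_of_gt hc), one_smul, smul_zero] at h4
      exact h4
    exact hη0 hη
  -- l1 x = 1
  have hl1x : l1 x = 1 := by
    by_contra hne
    have ht : 0 < l1 x := l1_pos hxne
    have htlt : l1 x < 1 := lt_of_le_of_ne hx1 hne
    have h1 : ((l1 x)⁻¹ • x) ∈
        ({η : Fin n → ℝ | (IncMatrix E).mulVec η = 0} ∩ {x | l1 x ≤ 1}) := by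
      refine ⟨?_, ?_⟩
      · show (IncMatrix E).mulVec ((l1 x)⁻¹ • x) = 0
        rw [Matrix.mulVec_smul, hx0, smul_zero]
      · show l1 ((l1 x)⁻¹ • x) ≤ 1
        rw [l1_smul, abs_of_nonneg (inv_nonneg.mpr ht.le),
          inv_mul_cancel₀ (ne_of_gt ht)]
    have h2 : (0 : Fin n → ℝ) ∈
        ({η : Fin n → ℝ | (IncMatrix E).mulVec η = 0} ∩ {x | l1 x ≤ 1}) := by
      refine ⟨?_, ?_⟩
      · show (IncMatrix E).mulVec 0 = 0
        exact Matrix.mulVec_zero _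
      · show l1 (0 : Fin n → ℝ) ≤ 1
        simp [l1]
    have hseg : x ∈ openSegment ℝ ((l1 x)⁻¹ • x) (0 : Fin n → ℝ) := by
      refine ⟨l1 x, 1 - l1 x, ht, by linarith, by ring, ?_⟩
      rw [smul_smul, mul_inv_cancel₀ (ne_of_gt ht), one_smul, smul_zero, add_zero]
    have := hext h2 h1 (by rwa [openSegment_symm] at hseg)
    exact hxne this.symm
  -- get a cycle in the support
  obtain ⟨C, hC⟩ := exists_cycle hs hx0 hxne
  have hL3 : (3:ℝ) ≤ (C.len : ℝ) := by exact_mod_cast C.hlen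
  have hLpos : (0:ℝ) < (C.len : ℝ) := by linarith
  set w : Fin n → ℝ := sChar C with hw
  have hsupp : ∀ j, w j ≠ 0 → x j ≠ 0 := by
    intro j hj
    obtain ⟨i, rfl⟩ := sChar_support hs C hj
    exact hC i
  set σ : Fin n → ℝ := fun j => if 0 ≤ x j then 1 else -1 with hσ
  -- choose ε
  set S : Finset (Fin n) := Finset.univ.filter (fun j => x j ≠ 0) with hS
  have hSne : S.Nonempty := by
    obtain ⟨j, hj⟩ : ∃ j, x j ≠ 0 := by
      by_contra h; push_neg at h; exact hxne (funext h)
    exact ⟨j, by simp [hS, hj]⟩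
  set ε₁ : ℝ := S.inf' hSne (fun j => |x j|) with hε₁
  have hε₁pos : 0 < ε₁ := by
    rw [hε₁, Finset.lt_inf'_iff]
    intro j hj
    rw [hS, Finset.mem_filter] at hj
    exact abs_pos.mpr hj.2
  set ε : ℝ := min ε₁ (1 / (2 * (n+1))) with hε
  have hεpos : 0 < ε := lt_min hε₁pos (by positivity)
  have hεsmall : ε ≤ 1 / (2 * (n+1)) := min_le_right _ _
  have hεle : ∀ j, x j ≠ 0 → ε ≤ |x j| := by
    intro j hj
    calc ε ≤ ε₁ := min_le_left _ _
      _ ≤ |x j| := Finset.inf'_le _ (by simp [hS, hj])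
  set s : ℝ := ∑ j, σ j * w j with hsdef
  -- termwise absolute values
  have hA : ∀ j, |x j + ε * w j| = |x j| + ε * (σ j * w j) := by
    intro j
    by_cases hxj : x j = 0
    · have hwj : w j = 0 := by
        by_contra h; exact (hsupp j h) hxj
      rw [hxj, hwj]; simp
    · have h1 : ε ≤ |x j| := hεle j hxj
      have h2 : |w j| ≤ 1 := abs_sChar_le_one C j
      have h3 : -|w j| ≤ w j := neg_abs_le _
      have h4 : w j ≤ |w j| := le_abs_self _
      by_cases hsgn : 0 ≤ x j
      · rw [hσ]; simp only [if_pos hsgn]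
        rw [abs_of_nonneg hsgn] at h1 ⊢
        rw [abs_of_nonneg (by nlinarith)]
        ring
      · push_neg at hsgn
        rw [hσ]; simp only [if_neg (not_le.mpr hsgn)]
        rw [abs_of_neg hsgn] at h1 ⊢
        rw [abs_of_nonpos (by nlinarith)]
        ring
  have hB : ∀ j, |x j - ε * w j| = |x j| - ε * (σ j * w j) := by
    intro j
    by_cases hxj : x j = 0
    · have hwj : w j = 0 := by
        by_contra h; exact (hsupp j h) hxj
      rw [hxj, hwj]; simp
    · have h1 : ε ≤ |x j| := hεle j hxj
      have h2 : |w j| ≤ 1 := abs_sChar_le_one C j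
      have h3 : -|w j| ≤ w j := neg_abs_le _
      have h4 : w j ≤ |w j| := le_abs_self _
      by_cases hsgn : 0 ≤ x j
      · rw [hσ]; simp only [if_pos hsgn]
        rw [abs_of_nonneg hsgn] at h1 ⊢
        rw [abs_of_nonneg (by nlinarith)]
        ring
      · push_neg at hsgn
        rw [hσ]; simp only [if_neg (not_le.mpr hsgn)]
        rw [abs_of_neg hsgn] at h1 ⊢
        rw [abs_of_nonpos (by nlinarith)]
        ring
  -- bound on s
  have hsabs : |s| ≤ (n : ℝ) := by
    rw [hsdef]
    calc |∑ j, σ j * w j| ≤ ∑ j, |σ j * w j| := Finset.abs_sum_le_sum_abs _ _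
      _ ≤ ∑ _j : Fin n, (1:ℝ) := by
          refine Finset.sum_le_sum (fun j _ => ?_)
          rw [abs_mul]
          have h2 : |w j| ≤ 1 := abs_sChar_le_one C j
          have h5 : |σ j| = 1 := by
            rw [hσ]; dsimp only; split_ifs <;> norm_num
          rw [h5, one_mul]; exact h2
      _ = (n : ℝ) := by simp
  have hεs1 : ε * |s| < 1 := by
    have h6 : ε * |s| ≤ (1 / (2 * (n+1))) * (n : ℝ) := by
      apply mul_le_mul hεsmall hsabs (abs_nonneg _) (by positivity)
    have h7 : (1 / (2 * ((n:ℝ)+1))) * (n : ℝ) < 1 := by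
      rw [div_mul_eq_mul_div, one_mul, div_lt_one (by positivity)]
      nlinarith [Nat.cast_nonneg (α := ℝ) n]
    calc ε * |s| ≤ _ := h6
      _ < 1 := by exact_mod_cast h7
  have hsle : s ≤ |s| := le_abs_self _
  have hsge : -|s| ≤ s := neg_abs_le _
  have hplus : 0 < 1 + ε * s := by nlinarith
  have hminus : 0 < 1 - ε * s := by nlinarith
  -- l1 of the perturbed vectors
  have hl1plus : l1 (x + ε • w) = 1 + ε * s := by
    rw [l1]
    have : ∀ j, |(x + ε • w) j| = |x j| + ε * (σ j * w j) := by
      intro j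
      simp only [Pi.add_apply, Pi.smul_apply, smul_eq_mul]
      exact hA j
    rw [Finset.sum_congr rfl (fun j _ => this j), Finset.sum_add_distrib,
      ← Finset.mul_sum]
    have h8 : ∑ j, |x j| = l1 x := rfl
    rw [h8, hl1x, ← hsdef]
  have hl1minus : l1 (x - ε • w) = 1 - ε * s := by
    rw [l1]
    have : ∀ j, |(x - ε • w) j| = |x j| - ε * (σ j * w j) := by
      intro j
      simp only [Pi.sub_apply, Pi.smul_apply, smul_eq_mul]
      exact hB j
    rw [Finset.sum_congr rfl (fun j _ => this j), Finset.sum_sub_distrib,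
      ← Finset.mul_sum]
    have h8 : ∑ j, |x j| = l1 x := rfl
    rw [h8, hl1x, ← hsdef]
  -- the two perturbed points
  have hmw : (IncMatrix E).mulVec w = 0 := mulVec_sChar hs C
  have hmem1 : ((1 + ε * s)⁻¹ • (x + ε • w)) ∈
      ({η : Fin n → ℝ | (IncMatrix E).mulVec η = 0} ∩ {x | l1 x ≤ 1}) := by
    refine ⟨?_, ?_⟩
    · show (IncMatrix E).mulVec _ = 0
      rw [Matrix.mulVec_smul, Matrix.mulVec_add, Matrix.mulVec_smul, hx0, hmw]
      simp
    · show l1 _ ≤ 1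
      rw [l1_smul, hl1plus, abs_of_pos (inv_pos.mpr hplus),
        inv_mul_cancel₀ (ne_of_gt hplus)]
  have hmem2 : ((1 - ε * s)⁻¹ • (x - ε • w)) ∈
      ({η : Fin n → ℝ | (IncMatrix E).mulVec η = 0} ∩ {x | l1 x ≤ 1}) := by
    refine ⟨?_, ?_⟩
    · show (IncMatrix E).mulVec _ = 0
      rw [Matrix.mulVec_smul, Matrix.mulVec_sub, Matrix.mulVec_smul, hx0, hmw]
      simp
    · show l1 _ ≤ 1
      rw [l1_smul, hl1minus, abs_of_pos (inv_pos.mpr hminus),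
        inv_mul_cancel₀ (ne_of_gt hminus)]
  have hseg : x ∈ openSegment ℝ ((1 + ε * s)⁻¹ • (x + ε • w))
      ((1 - ε * s)⁻¹ • (x - ε • w)) := by
    refine ⟨(1 + ε * s)/2, (1 - ε * s)/2, by linarith, by linarith, by ring, ?_⟩
    rw [smul_smul, smul_smul]
    rw [show (1 + ε * s)/2 * (1 + ε * s)⁻¹ = 1/2 by
      field_simp]
    rw [show (1 - ε * s)/2 * (1 - ε * s)⁻¹ = 1/2 by
      field_simp]
    funext j
    simp only [Pi.add_apply, Pi.sub_apply, Pi.smul_apply, smul_eq_mul]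
    ring
  have hx1eq := hext hmem1 hmem2 hseg
  -- derive w = s • x
  have hweq : w = s • x := by
    have h9 : x + ε • w = (1 + ε * s) • x := by
      have h10 := congrArg (fun z => (1 + ε * s) • z) hx1eq
      simp only [smul_smul, mul_inv_cancel₀ (ne_of_gt hplus), one_smul] at h10
      exact h10
    funext j
    have h11 := congrFun h9 j
    simp only [Pi.add_apply, Pi.smul_apply, smul_eq_mul] at h11 ⊢
    have h12 : ε * w j = ε * (s * x j) := by linarith [h11]; 
    exact mul_left_cancel₀ (ne_of_gt hεpos) h12
  -- |s| = len
  have hl1w : l1 w = (C.len : ℝ) := l1_sChar hs C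
  have hsl1 : |s| = (C.len : ℝ) := by
    have : l1 w = |s| * l1 x := by rw [hweq, l1_smul]
    rw [hl1x, mul_one] at this
    rw [← this, hl1w]
  have hsne : s ≠ 0 := by
    intro h
    rw [h, abs_zero] at hsl1
    linarith
  have hxw : x = s⁻¹ • w := by
    rw [hweq, smul_smul, inv_mul_cancel₀ hsne, one_smul]
  rcases lt_or_gt_of_ne hsne with hneg|hpos
  · -- s = -len, use reversed cycle
    have hsval : s = -(C.len : ℝ) := by
      rw [abs_of_neg hneg] at hsl1
      linarith
    refine ⟨revCycle C, ?_⟩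
    rw [sChar_rev, l1_neg, ← hw, hl1w, hxw, hsval]
    funext j
    simp only [Pi.smul_apply, Pi.neg_apply, smul_eq_mul]
    field_simp
  · -- s = len
    have hsval : s = (C.len : ℝ) := by
      rw [abs_of_pos hpos] at hsl1
      linarith
    refine ⟨C, ?_⟩
    rw [← hw, hl1w, hxw, hsval]

end Aux9

/-- Let `G` be a simple directed graph with incidence matrix `A ∈ ℝ^{m×n}` whose nullspace
is nontrivial.  Then the extreme points of `null(A) ∩ B₁ⁿ` are exactly `W₁(G)`. -/
theorem stmt9 {m n : ℕ} (E : Fin n → Fin m × Fin m) (hsimple : IsSimpleDigraph E)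
    (hker : ∃ η : Fin n → ℝ, η ≠ 0 ∧ (IncMatrix E).mulVec η = 0) :
    Set.extremePoints ℝ ({η : Fin n → ℝ | (IncMatrix E).mulVec η = 0} ∩ {x | l1 x ≤ 1})
      = W1 E :=
  Set.Subset.antisymm (Aux9.extreme_subset_W1 hsimple hker) (Aux9.W1_subset_extreme hsimple)
end

section
/- Let G be a simple directed graph with m vertices and n edges, with incidence matrix A ∈ ℝ^{m×n}, and suppose the nullspace of A is nontrivial. Then the maximum abstract simplicial complex associated with A equals {S ⊆ U_n : |S ∩ supp(z)| / ‖z‖₀ < 1/2 for every z ∈ W₁(G)}; that is, S belongs to T_max(A) if and only if for every simple cycle of G, S contains strictly fewer than half of the edges of that cycle. -/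
/-!
The signed characteristic vector of a cycle is a nonzero vector in the null space of the
incidence matrix, and for it the `T_max` inequality is exactly the half-condition. Conversely,
a nonzero null vector `η` is a conserved flow, so following edges that carry positive flow never
gets stuck and, by finiteness, closes up into a cycle `C` whose orientation agrees in sign with
`η` on all of its edges. Subtracting the largest multiple `c • w(C)` that preserves this sign
agreement kills a coordinate of `η` and splits every restricted ℓ₁ norm additively, so the
claim follows by induction on the size of the support.
-/
open Function Finset

section Cyc

variable {len : ℕ}

lemma val_cyc (i : Fin len) : (cyc i : ℕ) = if (i : ℕ) + 1 = len then 0 else (i : ℕ) + 1 := by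
  have := i.2
  split_ifs with h
  · simp [cyc, h]
  · exact Nat.mod_eq_of_lt (by omega)

lemma cyc_injective : Injective (cyc (len := len)) := by
  intro a b h
  have := a.2
  have := b.2
  have h' := congrArg Fin.val h
  rw [val_cyc, val_cyc] at h'
  ext
  split_ifs at h' <;> omega

lemma cyc_ne_self (hlen : 2 ≤ len) (i : Fin len) : cyc i ≠ i := by
  intro h
  have := i.2
  have h' := congrArg Fin.val h
  rw [val_cyc] at h'
  split_ifs at h' <;> omega

lemma cyc_cyc_ne_self (hlen : 3 ≤ len) (i : Fin len) : cyc (cyc i) ≠ i := by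
  intro h
  have := i.2
  have h' := congrArg Fin.val h
  rw [val_cyc, val_cyc] at h'
  split_ifs at h' <;> omega

end Cyc

lemma exists_iterate_mem_periodicPts {α : Type*} [Finite α] (f : α → α) (x : α) :
    ∃ k, f^[k] x ∈ periodicPts f := by
  obtain ⟨a, b, hab, h⟩ := Finite.exists_ne_map_eq_of_infinite (f^[·] x)
  rcases hab.lt_or_gt with hlt | hlt
  · refine ⟨a, mk_mem_periodicPts (n := b - a) (by omega) ?_⟩
    rw [IsPeriodicPt, IsFixedPt, ← iterate_add_apply, Nat.sub_add_cancel hlt.le]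
    exact h.symm
  · refine ⟨b, mk_mem_periodicPts (n := a - b) (by omega) ?_⟩
    rw [IsPeriodicPt, IsFixedPt, ← iterate_add_apply, Nat.sub_add_cancel hlt.le]
    exact h

lemma exists_cycle_of_forall_exists_rel {V : Type*} [Finite V] [Nonempty V]
    {R : V → V → Prop} (hR : ∀ v, ∃ w, R v w) :
    ∃ len > 0, ∃ vert : Fin len → V, Injective vert ∧ ∀ i, R (vert i) (vert (cyc i)) := by
  choose f hf using hR
  obtain ⟨k, hk⟩ := exists_iterate_mem_periodicPts f (Classical.arbitrary V)
  set x := f^[k] (Classical.arbitrary V)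
  refine ⟨minimalPeriod f x, minimalPeriod_pos_of_mem_periodicPts hk, (f^[·] x),
    fun i j h => Fin.ext (iterate_injOn_Iio_minimalPeriod i.2 j.2 h), fun i => ?_⟩
  have hcyc : f^[cyc i] x = f (f^[i] x) :=
    iterate_mod_minimalPeriod_eq.trans (iterate_succ_apply' f i x)
  simp only [hcyc, hf]

lemma exists_cycle_of_rel {V : Type*} [Finite V] {R : V → V → Prop}
    (hR : ∀ ⦃u v⦄, R u v → ∃ w, R v w) (hasymm : ∀ ⦃u v⦄, R u v → ¬R v u) {u v : V}
    (huv : R u v) :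
    ∃ len, 3 ≤ len ∧ ∃ vert : Fin len → V, Injective vert ∧ ∀ i, R (vert i) (vert (cyc i)) := by
  have : Nonempty {v // ∃ w, R v w} := ⟨⟨u, v, huv⟩⟩
  obtain ⟨len, hpos, vert, hinj, hstep⟩ :=
    exists_cycle_of_forall_exists_rel (R := fun a b : {v // ∃ w, R v w} => R a b)
      fun a => a.2.elim fun w hw => ⟨⟨w, hR hw⟩, hw⟩
  refine ⟨len, ?_, fun i => vert i, Subtype.val_injective.comp hinj, hstep⟩
  by_contra hlt
  interval_cases len
  · exact hasymm (hstep 0) (hstep 0)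
  · exact hasymm (hstep 0) (hstep 1)

variable {m n : ℕ} {E : Fin n → Fin m × Fin m}

lemma IsSimpleDigraph.eq_of_joins (hs : IsSimpleDigraph E) {j k : Fin n} {u v : Fin m}
    (hj : E j = (u, v) ∨ E j = (v, u)) (hk : E k = (u, v) ∨ E k = (v, u)) : j = k := by
  by_contra hne
  obtain ⟨h₁, h₂⟩ := hs.2 j k hne
  rcases hj with hj | hj <;> rcases hk with hk | hk <;> simp_all

section Flow

variable {η : Fin n → ℝ} {u v : Fin m} {j : Fin n}

def FlowStep (E : Fin n → Fin m × Fin m) (η : Fin n → ℝ) (u v : Fin m) : Prop :=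
  ∃ j, (0 < η j ∧ E j = (u, v)) ∨ (η j < 0 ∧ E j = (v, u))

lemma FlowStep.pos_of_eq (hs : IsSimpleDigraph E) (h : FlowStep E η u v)
    (hj : E j = (u, v)) : 0 < η j := by
  obtain ⟨k, ⟨hpos, hk⟩ | ⟨-, hk⟩⟩ := h
  · rwa [hs.eq_of_joins (Or.inl hj) (Or.inl hk)]
  · obtain rfl := hs.eq_of_joins (Or.inl hj) (Or.inr hk)
    have hloop := hs.1 j
    rw [hj] at hloop hk
    exact absurd (Prod.mk.inj hk).1 hloop

lemma FlowStep.neg_of_eq (hs : IsSimpleDigraph E) (h : FlowStep E η u v)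
    (hj : E j = (v, u)) : η j < 0 := by
  obtain ⟨k, ⟨-, hk⟩ | ⟨hneg, hk⟩⟩ := h
  · obtain rfl := hs.eq_of_joins (Or.inr hj) (Or.inl hk)
    have hloop := hs.1 j
    rw [hj] at hloop hk
    exact absurd (Prod.mk.inj hk).1 hloop
  · rwa [hs.eq_of_joins (Or.inr hj) (Or.inr hk)]

lemma FlowStep.not_flowStep_swap (hs : IsSimpleDigraph E) (huv : FlowStep E η u v) :
    ¬FlowStep E η v u := by
  intro hvu
  obtain ⟨j, ⟨hpos, hj⟩ | ⟨hneg, hj⟩⟩ := huv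
  · exact (hvu.neg_of_eq hs hj).not_gt hpos
  · exact (hvu.pos_of_eq hs hj).not_gt hneg

lemma exists_flowStep_of_ne_zero (hη : η ≠ 0) : ∃ u v, FlowStep E η u v := by
  obtain ⟨j, hj⟩ := Function.ne_iff.mp hη
  rcases (hj : η j ≠ 0).lt_or_gt with hneg | hpos
  · exact ⟨(E j).2, (E j).1, j, Or.inr ⟨hneg, rfl⟩⟩
  · exact ⟨(E j).1, (E j).2, j, Or.inl ⟨hpos, rfl⟩⟩

lemma FlowStep.exists_incMatrix_mul_pos (hs : IsSimpleDigraph E) (h : FlowStep E η u v) :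
    ∃ j, 0 < IncMatrix E v j * η j := by
  obtain ⟨j, ⟨hpos, hj⟩ | ⟨hneg, hj⟩⟩ := h
  · have huv : u ≠ v := by simpa [hj] using hs.1 j
    exact ⟨j, by simpa [IncMatrix, hj, huv] using hpos⟩
  · exact ⟨j, by simpa [IncMatrix, hj] using hneg⟩

lemma exists_flowStep_of_incMatrix_mul_neg (h : IncMatrix E v j * η j < 0) :
    ∃ w, FlowStep E η v w := by
  simp only [IncMatrix, Matrix.of_apply] at h
  split_ifs at h with h₁ h₂
  · exact ⟨(E j).2, j, Or.inl ⟨by linarith, by rw [← h₁]⟩⟩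
  · exact ⟨(E j).1, j, Or.inr ⟨by linarith, by rw [← h₂]⟩⟩
  · simp at h

lemma FlowStep.exists_flowStep (hs : IsSimpleDigraph E) (hη : (IncMatrix E).mulVec η = 0)
    (h : FlowStep E η u v) : ∃ w, FlowStep E η v w := by
  obtain ⟨j, hj⟩ := h.exists_incMatrix_mul_pos hs
  obtain ⟨k, hk⟩ : ∃ k, IncMatrix E v k * η k < 0 := by
    by_contra! hk
    have hsum : ∑ k, IncMatrix E v k * η k = 0 := congrFun hη v
    linarith [sum_pos' (fun k _ => hk k) ⟨j, mem_univ j, hj⟩]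
  exact exists_flowStep_of_incMatrix_mul_neg hk

end Flow

namespace SimpleCycleIn

variable (C : SimpleCycleIn m n E) {j : Fin n} {i : Fin C.len}

lemma vert_cyc_ne (i : Fin C.len) : C.vert (cyc i) ≠ C.vert i :=
  fun h => cyc_ne_self (by have := C.hlen; omega) i (C.inj h)

lemma step_ne_swap (i i' : Fin C.len) :
    (C.vert i, C.vert (cyc i)) ≠ (C.vert (cyc i'), C.vert i') := by
  intro h
  obtain ⟨h₁, h₂⟩ := Prod.mk.inj h
  exact cyc_cyc_ne_self C.hlen i' (by rw [← C.inj h₁, C.inj h₂])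

lemma sChar_eq_one (h : E j = (C.vert i, C.vert (cyc i))) : sChar C j = 1 :=
  if_pos ⟨i, h⟩

lemma sChar_eq_neg_one (h : E j = (C.vert (cyc i), C.vert i)) : sChar C j = -1 := by
  refine (if_neg ?_).trans (if_pos ⟨i, h⟩)
  rintro ⟨i', hi'⟩
  exact C.step_ne_swap i' i (hi'.symm.trans h)

lemma abs_sChar_of_ne_zero (h : sChar C j ≠ 0) : |sChar C j| = 1 := by
  unfold sChar at h ⊢
  split_ifs at h ⊢ <;> simp at h ⊢

noncomputable def edge (i : Fin C.len) : Fin n := (C.edges i).choose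

lemma edge_spec (i : Fin C.len) :
    E (C.edge i) = (C.vert i, C.vert (cyc i)) ∨ E (C.edge i) = (C.vert (cyc i), C.vert i) :=
  (C.edges i).choose_spec

lemma sChar_edge (i : Fin C.len) :
    E (C.edge i) = (C.vert i, C.vert (cyc i)) ∧ sChar C (C.edge i) = 1 ∨
      E (C.edge i) = (C.vert (cyc i), C.vert i) ∧ sChar C (C.edge i) = -1 :=
  (C.edge_spec i).imp (fun h => ⟨h, C.sChar_eq_one h⟩) (fun h => ⟨h, C.sChar_eq_neg_one h⟩)

lemma edge_injective : Injective C.edge := by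
  intro i i' h
  have hi := C.edge_spec i
  rw [h] at hi
  rcases hi with hi | hi <;> rcases C.edge_spec i' with hi' | hi' <;> rw [hi] at hi'
  · exact C.inj (Prod.mk.inj hi').1
  · exact absurd hi' (C.step_ne_swap i i')
  · exact absurd hi'.symm (C.step_ne_swap i' i)
  · exact C.inj (Prod.mk.inj hi').2

lemma sChar_eq_zero_of_notMem_range (hs : IsSimpleDigraph E) (hj : j ∉ Set.range C.edge) :
    sChar C j = 0 := by
  unfold sChar
  split_ifs with h₁ h₂
  · obtain ⟨i, hi⟩ := h₁
    exact absurd ⟨i, hs.eq_of_joins (C.edge_spec i) (Or.inl hi)⟩ hj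
  · obtain ⟨i, hi⟩ := h₂
    exact absurd ⟨i, hs.eq_of_joins (C.edge_spec i) (Or.inr hi)⟩ hj
  · rfl

lemma sChar_ne_zero : sChar C ≠ 0 := by
  intro h
  let i₀ : Fin C.len := ⟨0, by have := C.hlen; omega⟩
  have h₀ := congrFun h (C.edge i₀)
  rcases C.sChar_edge i₀ with ⟨-, h₁⟩ | ⟨-, h₁⟩ <;> simp [h₁] at h₀

lemma incMatrix_mul_sChar_edge (u : Fin m) (i : Fin C.len) :
    IncMatrix E u (C.edge i) * sChar C (C.edge i) =
      (if C.vert (cyc i) = u then 1 else 0) - (if C.vert i = u then 1 else 0) := by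
  have hne := C.vert_cyc_ne i
  rcases C.sChar_edge i with ⟨hE, hw⟩ | ⟨hE, hw⟩ <;>
    simp only [hw, IncMatrix, Matrix.of_apply, hE] <;> split_ifs <;> simp_all

lemma mulVec_sChar (hs : IsSimpleDigraph E) : (IncMatrix E).mulVec (sChar C) = 0 := by
  funext u
  have hsum : ∑ i, IncMatrix E u (C.edge i) * sChar C (C.edge i) =
      ∑ j, IncMatrix E u j * sChar C j :=
    Fintype.sum_of_injective C.edge C.edge_injective _ _
      (fun j hj => by rw [C.sChar_eq_zero_of_notMem_range hs hj, mul_zero]) fun _ => rfl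
  have hrot := (Finite.injective_iff_bijective.mp (cyc_injective (len := C.len))).sum_comp
    fun i => if C.vert i = u then (1 : ℝ) else 0
  simp only [Matrix.mulVec, dotProduct, ← hsum, incMatrix_mul_sChar_edge, sum_sub_distrib, hrot,
    sub_self, Pi.zero_apply]

lemma l1S_sChar (T : Finset (Fin n)) : l1S T (sChar C) = #(T ∩ suppF (sChar C)) := by
  have habs : ∀ j, |sChar C j| = if j ∈ suppF (sChar C) then 1 else 0 := by
    intro j
    by_cases h : sChar C j = 0
    · simp [suppF, h]
    · simp [suppF, h, C.abs_sChar_of_ne_zero h]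
  simp only [l1S, habs, sum_boole, filter_mem_eq_inter]

end SimpleCycleIn

theorem exists_conformal_cycle (hs : IsSimpleDigraph E) {η : Fin n → ℝ}
    (hη : (IncMatrix E).mulVec η = 0) (hne : η ≠ 0) :
    ∃ C : SimpleCycleIn m n E, ∀ j, sChar C j ≠ 0 → 0 < sChar C j * η j := by
  obtain ⟨u, v, huv⟩ := exists_flowStep_of_ne_zero (E := E) hne
  obtain ⟨len, hlen, vert, hinj, hstep⟩ := exists_cycle_of_rel
    (fun _ _ h => h.exists_flowStep hs hη) (fun _ _ h => h.not_flowStep_swap hs) huv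
  refine ⟨⟨len, hlen, vert, hinj, fun i => (hstep i).imp fun _ => Or.imp And.right And.right⟩,
    fun j hj => ?_⟩
  unfold sChar at hj ⊢
  split_ifs at hj ⊢ with h₁ h₂
  · obtain ⟨i, hi⟩ := h₁
    simpa using (hstep i).pos_of_eq hs hi
  · obtain ⟨i, hi⟩ := h₂
    simpa using (hstep i).neg_of_eq hs hi
  · exact absurd rfl hj

section Support

variable {x w η : Fin n → ℝ}

@[simp]
lemma mem_suppF {j : Fin n} : j ∈ suppF x ↔ x j ≠ 0 := by
  simp [suppF]

lemma suppF_nonempty (hx : x ≠ 0) : (suppF x).Nonempty := by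
  obtain ⟨j, hj⟩ := Function.ne_iff.mp hx
  exact ⟨j, mem_suppF.mpr hj⟩

lemma suppF_inv_l1_smul (x : Fin n → ℝ) : suppF ((l1 x)⁻¹ • x) = suppF x := by
  ext j
  simp only [mem_suppF, Pi.smul_apply, smul_eq_mul, ne_eq, mul_eq_zero, inv_eq_zero, not_or,
    and_iff_right_iff_imp]
  intro hj
  exact (lt_of_lt_of_le (abs_pos.mpr hj)
    (single_le_sum (fun i _ => abs_nonneg (x i)) (mem_univ j))).ne'

lemma abs_sub_add_abs_of_mul_nonneg {a b : ℝ} (hab : 0 ≤ a * b) (h : |b| ≤ |a|) :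
    |a - b| + |b| = |a| := by
  rcases abs_cases a with ⟨ha, ha'⟩ | ⟨ha, ha'⟩ <;>
    rcases abs_cases b with ⟨hb, hb'⟩ | ⟨hb, hb'⟩ <;>
    rcases abs_cases (a - b) with ⟨hd, hd'⟩ | ⟨hd, hd'⟩ <;> nlinarith

theorem exists_sub_smul_of_conformal (hw : w ≠ 0) (hconf : ∀ j, w j ≠ 0 → 0 < w j * η j) :
    ∃ c > 0, suppF (η - c • w) ⊂ suppF η ∧
      ∀ T, l1S T η = l1S T (η - c • w) + c * l1S T w := by
  obtain ⟨j₀, hj₀, hmin⟩ := exists_min_image (suppF w) (fun j => |η j| / |w j|) (suppF_nonempty hw)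
  have hw₀ : w j₀ ≠ 0 := mem_suppF.mp hj₀
  have hη₀ : η j₀ ≠ 0 := right_ne_zero_of_mul (hconf j₀ hw₀).ne'
  set c := |η j₀| / |w j₀|
  have hc : 0 < c := div_pos (abs_pos.mpr hη₀) (abs_pos.mpr hw₀)
  have habs (j : Fin n) : |(η - c • w) j| + c * |w j| = |η j| := by
    by_cases h : w j = 0
    · simp [h]
    have hle : c * |w j| ≤ |η j| := (le_div_iff₀ (abs_pos.mpr h)).mp (hmin j (mem_suppF.mpr h))
    have := abs_sub_add_abs_of_mul_nonneg (a := η j) (b := c * w j)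
      (by nlinarith [mul_pos hc (hconf j h)]) (by rwa [abs_mul, abs_of_pos hc])
    rwa [abs_mul, abs_of_pos hc] at this
  refine ⟨c, hc, ?_, fun T => by simp only [l1S, mul_sum, ← sum_add_distrib, habs]⟩
  refine (ssubset_iff_of_subset fun j hj => ?_).mpr ⟨j₀, mem_suppF.mpr hη₀, ?_⟩
  · rw [mem_suppF] at hj ⊢
    intro h
    have := habs j
    rw [h, abs_zero] at this
    exact hj (abs_eq_zero.mp (by nlinarith [abs_nonneg ((η - c • w) j), abs_nonneg (w j)]))
  · have := habs j₀
    rw [div_mul_cancel₀ _ (abs_ne_zero.mpr hw₀)] at this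
    simpa using this

end Support

theorem mem_Tmax_of_forall_cycle (hs : IsSimpleDigraph E) {S : Finset (Fin n)}
    (hcyc : ∀ C : SimpleCycleIn m n E, l1S S (sChar C) < l1S Sᶜ (sChar C)) :
    S ∈ Tmax (IncMatrix E) := by
  intro η hη hne
  induction hk : #(suppF η) using Nat.strong_induction_on generalizing η with
  | _ k ih =>
  obtain ⟨C, hconf⟩ := exists_conformal_cycle hs hη hne
  obtain ⟨c, hc, hsupp, hl1⟩ := exists_sub_smul_of_conformal C.sChar_ne_zero hconf
  have hη' : (IncMatrix E).mulVec (η - c • sChar C) = 0 := by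
    rw [Matrix.mulVec_sub, Matrix.mulVec_smul, hη, C.mulVec_sChar hs, smul_zero, sub_zero]
  have hle : l1S S (η - c • sChar C) ≤ l1S Sᶜ (η - c • sChar C) := by
    rcases eq_or_ne (η - c • sChar C) 0 with h0 | h0
    · rw [h0]
      simp [l1S]
    · exact (ih _ (hk ▸ card_lt_card hsupp) _ hη' h0 rfl).le
  rw [hl1 S, hl1 Sᶜ]
  linarith [mul_lt_mul_of_pos_left (hcyc C) hc]

lemma card_inter_lt_card_compl_inter_iff {ι : Type*} [Fintype ι] [DecidableEq ι]
    {S P : Finset ι} (hP : P.Nonempty) :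
    #(S ∩ P) < #(Sᶜ ∩ P) ↔ (#(S ∩ P) : ℝ) / #P < 1 / 2 := by
  have hsplit : #(P ∩ S) + #(P \ S) = #P := card_inter_add_card_sdiff P S
  rw [inter_comm Sᶜ, ← sdiff_eq_inter_compl, inter_comm S,
    div_lt_iff₀ (Nat.cast_pos.mpr hP.card_pos), ← hsplit]
  push_cast
  constructor <;> intro h
  · linarith [(Nat.cast_lt (α := ℝ)).mpr h]
  · exact_mod_cast (by linarith : (#(P ∩ S) : ℝ) < #(P \ S))

theorem stmt10_general {m n : ℕ} (E : Fin n → Fin m × Fin m) (hsimple : IsSimpleDigraph E) :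
    Tmax (IncMatrix E) = {S : Finset (Fin n) |
      ∀ z ∈ W1 E, ((S ∩ suppF z).card : ℝ) / ((suppF z).card : ℝ) < 1 / 2} := by
  ext S
  have hcycle (C : SimpleCycleIn m n E) : l1S S (sChar C) < l1S Sᶜ (sChar C) ↔
      ((S ∩ suppF (sChar C)).card : ℝ) / (suppF (sChar C)).card < 1 / 2 := by
    rw [C.l1S_sChar, C.l1S_sChar, Nat.cast_lt]
    exact card_inter_lt_card_compl_inter_iff (suppF_nonempty C.sChar_ne_zero)
  simp only [W1, Set.mem_ofPred_eq, forall_exists_index, forall_eq_apply_imp_iff,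
    suppF_inv_l1_smul, ← hcycle]
  exact ⟨fun hS C => hS _ (C.mulVec_sChar hsimple) C.sChar_ne_zero,
    mem_Tmax_of_forall_cycle hsimple⟩

/-- Let `G` be a simple directed graph with incidence matrix `A ∈ ℝ^{m×n}` whose nullspace
is nontrivial.  Then `T_max(A)` equals the collection of edge index sets `S` such that for
every `z ∈ W₁(G)` one has `|S ∩ supp z| / ‖z‖₀ < 1/2`, i.e. `S` contains strictly fewer
than half of the edges of every simple cycle of `G`. -/
theorem stmt10 {m n : ℕ} (E : Fin n → Fin m × Fin m) (hsimple : IsSimpleDigraph E)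
    (hker : ∃ η : Fin n → ℝ, η ≠ 0 ∧ (IncMatrix E).mulVec η = 0) :
    Tmax (IncMatrix E) = {S : Finset (Fin n) |
      ∀ z ∈ W1 E, ((S ∩ suppF z).card : ℝ) / ((suppF z).card : ℝ) < 1 / 2} :=
  stmt10_general E hsimple
end
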